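/- arXiv:1711.06293 — 9 statements merged into one kernel-verified Lean document; each statement's English description precedes it below -/
import Mathlib

section
/- Let D be a digon-free loopless strict digraph with n vertices, and let Δ̃ = max over vertices v of sqrt(d^+(v)·d^-(v)). Then α(D) ≥ n/((2Δ̃/3) + 1). -/
variable {V : Type*}

/-- A directed cycle in a digraph `D`, given as an injective map `Fin m → V`
(`m ≥ 2`) whose consecutive images (cyclically) are edges of `D`. -/
def IsCycleFun (D : V → V → Prop) {m : ℕ} (f : Fin m → V) : Prop :=
  2 ≤ m ∧ Function.Injective f ∧ ∀ i : Fin m, D (f i) (f (finRotate m i))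

/-- The set `S` contains a directed cycle of `D`. -/
def HasCycleIn (D : V → V → Prop) (S : Set V) : Prop :=
  ∃ (m : ℕ) (f : Fin m → V), IsCycleFun D f ∧ ∀ i, f i ∈ S

/-- Out-degree of a vertex. -/
noncomputable def outDeg (D : V → V → Prop) (v : V) : ℕ := Nat.card {u | D v u}

/-- In-degree of a vertex. -/
noncomputable def inDeg (D : V → V → Prop) (v : V) : ℕ := Nat.card {u | D u v}

/-- A coloring of the vertices of `D` with no monochromatic directed cycle. -/
def ProperColoring (D : V → V → Prop) {k : ℕ} (c : V → Fin k) : Prop :=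
  ∀ (m : ℕ) (f : Fin m → V), IsCycleFun D f → ∃ i j, c (f i) ≠ c (f j)

/-- The number of proper `k`-colorings of `D` (value of the dichromatic polynomial). -/
noncomputable def numColorings (V : Type*) (D : V → V → Prop) (k : ℕ) : ℕ :=
  Nat.card {c : V → Fin k // ProperColoring D c}

/-- The finset `S` carries a (Hamiltonian on `S`) directed cycle of `D`. -/
def IsCycleSet (D : V → V → Prop) (S : Finset V) : Prop :=
  2 ≤ S.card ∧ ∃ f : Fin S.card ≃ {x // x ∈ S},
    ∀ i, D (f i) (f (finRotate S.card i))

/-- The finset `S` induces exactly a directed cycle of `D`. -/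
def IsInducedCycleSet (D : V → V → Prop) (S : Finset V) : Prop :=
  2 ≤ S.card ∧ ∃ f : Fin S.card ≃ {x // x ∈ S},
    (∀ i, D (f i) (f (finRotate S.card i))) ∧
    ∀ a b : {x // x ∈ S}, D (a : V) b → ∃ i, f i = a ∧ f (finRotate S.card i) = b

/-- `D` has girth `g` : it has a directed cycle of length `g` and no shorter one. -/
def HasGirth (D : V → V → Prop) (g : ℕ) : Prop :=
  (∃ f : Fin g → V, IsCycleFun D f) ∧
    ∀ (m : ℕ) (f : Fin m → V), IsCycleFun D f → g ≤ m

/-!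
Order the vertices uniformly at random and keep those placed before all their out-neighbours
or before all their in-neighbours. The kept set is acyclic: the last vertex of a cycle comes
after both its successor and its predecessor on the cycle. A vertex with out- and
in-neighbourhoods of sizes `a` and `b`, disjoint because `D` is digon-free, is kept with
probability `1/(a+1) + 1/(b+1) - 1/(a+b+1)`, which is at least `3/(2√(ab)+3)`; so some
ordering keeps at least `3n/(2Δ+3)` vertices.
-/

open Finset

section Orderings

lemma swap_apply_mem_erase [DecidableEq V] {W : Finset V} {v w u : V} (hw : w ∈ W)
    (hu : u ∈ W.erase w) :
    Equiv.swap w v u ∈ W.erase v := by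
  obtain ⟨huw, huW⟩ := mem_erase.1 hu
  rcases eq_or_ne u v with rfl | huv
  · simpa [Equiv.swap_apply_right] using ⟨Ne.symm huw, hw⟩
  · simpa [Equiv.swap_apply_of_ne_of_ne huw huv] using ⟨huv, huW⟩

variable {α : Type*} [Fintype V] [DecidableEq V] [Fintype α] [LinearOrder α]

lemma card_filter_forall_erase_lt_le {W : Finset V} {v w : V} (hw : w ∈ W) :
    #{σ : V ≃ α | ∀ u ∈ W.erase v, σ v < σ u} ≤ #{σ : V ≃ α | ∀ u ∈ W.erase w, σ w < σ u} := by
  refine card_le_card_of_injOn (fun σ => (Equiv.swap w v).trans σ) (fun σ hσ => ?_)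
    (fun σ _ τ _ h => ?_)
  · simp only [coe_filter, mem_univ, true_and, Set.mem_ofPred_eq] at hσ ⊢
    intro u hu
    simpa [Equiv.swap_apply_left] using hσ _ (swap_apply_mem_erase hw hu)
  · exact Equiv.ext fun x => by simpa using DFunLike.congr_fun h (Equiv.swap w v x)

lemma card_filter_forall_erase_lt_eq {W : Finset V} {v w : V} (hv : v ∈ W) (hw : w ∈ W) :
    #{σ : V ≃ α | ∀ u ∈ W.erase v, σ v < σ u} = #{σ : V ≃ α | ∀ u ∈ W.erase w, σ w < σ u} :=
  (card_filter_forall_erase_lt_le hw).antisymm (card_filter_forall_erase_lt_le hv)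

lemma card_filter_forall_lt_mul {T : Finset V} {v : V} (hv : v ∉ T) :
    #{σ : V ≃ α | ∀ u ∈ T, σ v < σ u} * (#T + 1) = Fintype.card (V ≃ α) := by
  set W := insert v T
  let first : V → Finset (V ≃ α) := fun w => {σ | ∀ u ∈ W.erase w, σ w < σ u}
  have hcover : (univ : Finset (V ≃ α)) = W.biUnion first := by
    refine (eq_univ_of_forall fun σ => ?_).symm
    obtain ⟨w, hw, hmin⟩ := W.exists_min_image σ (insert_nonempty v T)
    refine mem_biUnion.2 ⟨w, hw, mem_filter.2 ⟨mem_univ _, fun u hu => ?_⟩⟩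
    obtain ⟨huw, huW⟩ := mem_erase.1 hu
    exact (hmin u huW).lt_of_ne (σ.injective.ne (Ne.symm huw))
  have hdisj : (W : Set V).PairwiseDisjoint first := by
    intro w₁ h₁ w₂ h₂ hne
    refine disjoint_left.2 fun σ hσ₁ hσ₂ => ?_
    simp only [first, mem_filter, mem_univ, true_and] at hσ₁ hσ₂
    exact (hσ₁ w₂ (mem_erase.2 ⟨Ne.symm hne, h₂⟩)).asymm (hσ₂ w₁ (mem_erase.2 ⟨hne, h₁⟩))
  calc #{σ : V ≃ α | ∀ u ∈ T, σ v < σ u} * (#T + 1) = ∑ w ∈ W, #(first w) := by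
        rw [sum_congr rfl fun w hw => card_filter_forall_erase_lt_eq hw (mem_insert_self v T),
          sum_const, smul_eq_mul, card_insert_of_notMem hv, erase_insert hv, mul_comm]
    _ = Fintype.card (V ≃ α) := by rw [← card_biUnion hdisj, ← hcover, card_univ]

lemma card_filter_forall_lt_or_forall_lt {A B : Finset V} {v : V} (hA : v ∉ A) (hB : v ∉ B)
    (hAB : Disjoint A B) :
    (#{σ : V ≃ α | (∀ u ∈ A, σ v < σ u) ∨ ∀ u ∈ B, σ v < σ u} : ℝ) =
      Fintype.card (V ≃ α) * (1 / (#A + 1) + 1 / (#B + 1) - 1 / (#A + #B + 1)) := by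
  have hcard (T : Finset V) (hT : v ∉ T) :
      (#{σ : V ≃ α | ∀ u ∈ T, σ v < σ u} : ℝ) = Fintype.card (V ≃ α) / (#T + 1) := by
    rw [eq_div_iff (by positivity)]
    exact_mod_cast card_filter_forall_lt_mul hT
  have hunion : #{σ : V ≃ α | (∀ u ∈ A, σ v < σ u) ∨ ∀ u ∈ B, σ v < σ u} +
      #{σ : V ≃ α | ∀ u ∈ A ∪ B, σ v < σ u} =
      #{σ : V ≃ α | ∀ u ∈ A, σ v < σ u} + #{σ : V ≃ α | ∀ u ∈ B, σ v < σ u} := by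
    simp only [forall_mem_union, filter_or, filter_and, card_union_add_card_inter]
  have hvAB : v ∉ A ∪ B := by simp [hA, hB]
  have hunion' := congrArg (Nat.cast : ℕ → ℝ) hunion
  push_cast at hunion'
  rw [hcard A hA, hcard B hB, hcard _ hvAB, card_union_of_disjoint hAB] at hunion'
  push_cast at hunion'
  rw [mul_sub, mul_add, mul_one_div, mul_one_div, mul_one_div]
  linarith

end Orderings

lemma three_div_le_one_div_add_one_div_sub_one_div {a b Δ : ℝ} (ha : 0 ≤ a) (hb : 0 ≤ b)
    (hΔ : √(a * b) ≤ Δ) :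
    3 / (2 * Δ + 3) ≤ 1 / (a + 1) + 1 / (b + 1) - 1 / (a + b + 1) := by
  set s := √(a * b)
  have hs : 0 ≤ s := Real.sqrt_nonneg _
  have hs2 : s ^ 2 = a * b := Real.sq_sqrt (mul_nonneg ha hb)
  have hsum : 2 * s ≤ a + b := by nlinarith [sq_nonneg (a - b), sq_nonneg (a + b - 2 * s)]
  calc 3 / (2 * Δ + 3) ≤ 3 / (2 * s + 3) := by gcongr
    _ ≤ 1 / (a + 1) + 1 / (b + 1) - 1 / (a + b + 1) := by
      rw [div_add_div _ _ (by positivity) (by positivity),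
        div_sub_div _ _ (by positivity) (by positivity),
        div_le_div_iff₀ (by positivity) (by positivity)]
      have hd : 0 ≤ a + b - 2 * s := by linarith
      nlinarith [mul_nonneg (mul_nonneg hs hs) hd, mul_nonneg hs (mul_nonneg hd hd),
        mul_nonneg hs hd, mul_nonneg ha hb]

section Digraph

variable [Fintype V] (D : V → V → Prop) [DecidableRel D]

def outNbrs (v : V) : Finset V := {u | D v u}

def inNbrs (v : V) : Finset V := {u | D u v}

lemma outDeg_eq_card_outNbrs (v : V) : outDeg D v = #(outNbrs D v) := by
  rw [outDeg, Nat.card_coe_set_eq, Set.ncard_eq_toFinset_card', Set.toFinset_ofPred, outNbrs]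

lemma inDeg_eq_card_inNbrs (v : V) : inDeg D v = #(inNbrs D v) := by
  rw [inDeg, Nat.card_coe_set_eq, Set.ncard_eq_toFinset_card', Set.toFinset_ofPred, inNbrs]

def earlyVertices {α : Type*} [LinearOrder α] (σ : V → α) : Finset V :=
  {v | (∀ u ∈ outNbrs D v, σ v < σ u) ∨ ∀ u ∈ inNbrs D v, σ v < σ u}

lemma not_hasCycleIn_earlyVertices {α : Type*} [LinearOrder α] (σ : V → α) :
    ¬ HasCycleIn D ↑(earlyVertices D σ) := by
  rintro ⟨m, f, ⟨hm, -, hedge⟩, hmem⟩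
  obtain ⟨i, -, hmax⟩ := (univ : Finset (Fin m)).exists_max_image (σ ∘ f)
    ⟨⟨0, by omega⟩, mem_univ _⟩
  have hpred : D (f ((finRotate m).symm i)) (f i) := by
    simpa only [Equiv.apply_symm_apply] using hedge ((finRotate m).symm i)
  have hi := hmem i
  simp only [earlyVertices, outNbrs, inNbrs, coe_filter, mem_filter, mem_univ, true_and,
    Set.mem_ofPred_eq] at hi
  rcases hi with hout | hin
  · exact (hout _ (hedge i)).not_ge (hmax _ (mem_univ _))
  · exact (hin _ hpred).not_ge (hmax _ (mem_univ _))

variable {D} [DecidableEq V] {Δ : ℝ}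

lemma card_filter_mem_earlyVertices {α : Type*} [Fintype α] [LinearOrder α]
    (hloopless : ∀ v, ¬ D v v) (hdigonfree : ∀ a b, D a b → ¬ D b a)
    {v : V} (hΔ : √((outDeg D v : ℝ) * (inDeg D v : ℝ)) ≤ Δ) :
    Fintype.card (V ≃ α) * (3 / (2 * Δ + 3)) ≤ (#{σ : V ≃ α | v ∈ earlyVertices D σ} : ℝ) := by
  have hout : v ∉ outNbrs D v := by simpa [outNbrs] using hloopless v
  have hin : v ∉ inNbrs D v := by simpa [inNbrs] using hloopless v
  have hdisj : Disjoint (outNbrs D v) (inNbrs D v) :=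
    disjoint_left.2 fun u hvu huv => by
      simp only [outNbrs, inNbrs, mem_filter, mem_univ, true_and] at hvu huv
      exact hdigonfree _ _ hvu huv
  rw [outDeg_eq_card_outNbrs, inDeg_eq_card_inNbrs] at hΔ
  simp only [earlyVertices, mem_filter, mem_univ, true_and]
  rw [card_filter_forall_lt_or_forall_lt hout hin hdisj]
  gcongr
  exact three_div_le_one_div_add_one_div_sub_one_div (by positivity) (by positivity) hΔ

lemma exists_card_earlyVertices_ge (hloopless : ∀ v, ¬ D v v)
    (hdigonfree : ∀ a b, D a b → ¬ D b a)
    (hΔ : ∀ v, √((outDeg D v : ℝ) * (inDeg D v : ℝ)) ≤ Δ) :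
    ∃ σ : V ≃ Fin (Fintype.card V),
      Fintype.card V * (3 / (2 * Δ + 3)) ≤ (#(earlyVertices D σ) : ℝ) := by
  have hdouble : ∑ σ : V ≃ Fin (Fintype.card V), #(earlyVertices D σ) =
      ∑ v, #{σ : V ≃ Fin (Fintype.card V) | v ∈ earlyVertices D σ} := by
    simp only [card_filter]
    rw [sum_comm]
    refine sum_congr rfl fun σ _ => ?_
    rw [← card_filter, filter_mem_eq_inter, univ_inter]
  obtain ⟨σ, -, hσ⟩ := exists_le_of_sum_le (univ_nonempty_iff.2 ⟨Fintype.equivFin V⟩) <|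
    calc ∑ _σ : V ≃ Fin (Fintype.card V), Fintype.card V * (3 / (2 * Δ + 3))
        = ∑ _v : V, Fintype.card (V ≃ Fin (Fintype.card V)) * (3 / (2 * Δ + 3)) := by
          simp only [sum_const, card_univ, nsmul_eq_mul]; ring
      _ ≤ _ := sum_le_sum fun v _ => card_filter_mem_earlyVertices hloopless hdigonfree (hΔ v)
      _ = ∑ σ : V ≃ Fin (Fintype.card V), (#(earlyVertices D σ) : ℝ) := mod_cast hdouble.symm
  exact ⟨σ, hσ⟩

end Digraph

/-- For a digon-free digraph, α(D) ≥ n/((2Δ̃/3)+1) with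
Δ̃ = max over vertices of √(d⁺(v)·d⁻(v)). -/
theorem stmt_4 {V : Type*} [Fintype V] (D : V → V → Prop) (hloopless : ∀ v, ¬ D v v)
    (hdigonfree : ∀ a b, D a b → ¬ D b a)
    (Δ : ℝ)
    (hΔ : IsGreatest {x : ℝ | ∃ v : V, x = Real.sqrt ((outDeg D v : ℝ) * (inDeg D v : ℝ))} Δ) :
    ∃ S : Finset V, ¬ HasCycleIn D ↑S ∧
      (Fintype.card V : ℝ) / (2 * Δ / 3 + 1) ≤ (S.card : ℝ) := by
  classical
  obtain ⟨σ, hσ⟩ := exists_card_earlyVertices_ge hloopless hdigonfree fun v => hΔ.2 ⟨v, rfl⟩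
  refine ⟨earlyVertices D σ, not_hasCycleIn_earlyVertices D σ, ?_⟩
  calc (Fintype.card V : ℝ) / (2 * Δ / 3 + 1) = Fintype.card V * (3 / (2 * Δ + 3)) := by
        rw [show 2 * Δ / 3 + 1 = (2 * Δ + 3) / 3 by ring, div_div_eq_mul_div, mul_div_assoc]
    _ ≤ _ := hσ
end

section
/- Let D be a loopless strict digraph with n vertices, girth g (length of its shortest directed cycle), and exactly t induced directed cycles. If t·g ≥ n, then α(D) ≥ ((g−1)/g)·(n^g/(t·g))^{1/(g−1)}. -/
variable {V : Type*}

/-!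
Pick a random vertex set `S` containing each vertex independently with probability `p`, and
delete one vertex from every induced directed cycle inside `S`. What remains is acyclic, since a
shortest directed cycle inside any vertex set has no chord and is therefore induced. Every induced
cycle has at least `g` vertices, so the expected size of the remainder is at least
`p n - t p ^ g`; the choice `p ^ (g - 1) = n / (t g)`, which is at most `1` because `t g ≥ n`,
makes this `(g - 1) / g * p n`, the claimed bound.
-/

open Finset

section Cycles

variable {D : V → V → Prop}

open Fin.NatCast in
lemma IsCycleFun.exists_shorter_of_chord {m : ℕ} {f : Fin (m + 1) → V} (hf : IsCycleFun D f)
    {i j : Fin (m + 1)} (hD : D (f i) (f j)) (hij : i ≠ j) (hj : j ≠ i + 1) :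
    ∃ k < m + 1, ∃ f' : Fin k → V, IsCycleFun D f' ∧ ∀ x, f' x ∈ Set.range f := by
  set d := (i - j).val with hd
  have hd0 : d ≠ 0 := fun h => hij (sub_eq_zero.mp (Fin.ext h))
  have hdm : d ≠ m := fun h => hj (by
    rw [← sub_eq_iff_eq_add', ← neg_sub, neg_eq_iff_eq_neg]
    exact Fin.ext (h.trans Fin.coe_neg_one.symm))
  have hdlt : d < m + 1 := (i - j).isLt
  -- walk from `f j` along the cycle to `f i = f (j + d)`, then return through the chord
  refine ⟨d + 1, by omega, fun k => f (j + (k.val : Fin (m + 1))), ⟨by omega, ?_, ?_⟩,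
    fun k => ⟨_, rfl⟩⟩
  · intro a b hab
    have := congrArg Fin.val (add_left_cancel (hf.2.1 hab))
    exact Fin.ext (by rwa [Fin.val_cast_of_lt (by omega), Fin.val_cast_of_lt (by omega)] at this)
  · intro k
    simp only [finRotate_apply, Fin.val_add_one]
    split_ifs with hk
    · have hi : j + ((k.val : ℕ) : Fin (m + 1)) = i := by
        rw [hk, Fin.val_last, hd, Fin.cast_val_eq_self, add_sub_cancel]
      simpa [hi] using hD
    · have := hf.2.2 (j + (k.val : Fin (m + 1)))
      rwa [finRotate_apply, add_assoc, ← Nat.cast_succ] at this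

lemma IsCycleFun.isInducedCycleSet_image [DecidableEq V] {m : ℕ} {f : Fin m → V}
    (hf : IsCycleFun D f) (hchord : ∀ i j, D (f i) (f j) → j = finRotate m i) :
    IsInducedCycleSet D (univ.image f) := by
  have hcard : #(univ.image f) = m := by
    rw [card_image_of_injective _ hf.2.1, card_univ, Fintype.card_fin]
  rw [IsInducedCycleSet, hcard]
  let e : Fin m ≃ {x // x ∈ univ.image f} :=
    Equiv.ofBijective (fun i => ⟨f i, mem_image_of_mem f (mem_univ i)⟩)
      ⟨fun a b h => hf.2.1 (congrArg Subtype.val h), fun ⟨x, hx⟩ => by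
        obtain ⟨i, -, rfl⟩ := mem_image.mp hx
        exact ⟨i, rfl⟩⟩
  refine ⟨hf.1, e, hf.2.2, fun a b hab => ?_⟩
  obtain ⟨i, rfl⟩ := e.surjective a
  obtain ⟨j, rfl⟩ := e.surjective b
  exact ⟨i, rfl, by rw [← hchord i j hab]⟩

lemma IsCycleFun.exists_isInducedCycleSet_subset (hloop : ∀ v, ¬ D v v) {S : Set V} {m : ℕ}
    {f : Fin m → V} (hf : IsCycleFun D f) (hfS : ∀ i, f i ∈ S) :
    ∃ C : Finset V, IsInducedCycleSet D C ∧ ↑C ⊆ S := by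
  classical
  induction m using Nat.strong_induction_on with
  | _ m ih =>
    obtain ⟨m, rfl⟩ : ∃ m', m = m' + 1 := ⟨m - 1, by have := hf.1; omega⟩
    by_cases hchord : ∃ i j, D (f i) (f j) ∧ j ≠ i + 1
    · obtain ⟨i, j, hD, hj⟩ := hchord
      have hij : i ≠ j := by rintro rfl; exact hloop _ hD
      obtain ⟨k, hk, f', hf', hrange⟩ := hf.exists_shorter_of_chord hD hij hj
      exact ih k hk hf' fun x => by obtain ⟨y, hy⟩ := hrange x; exact hy ▸ hfS y
    · push Not at hchord
      refine ⟨univ.image f, hf.isInducedCycleSet_image fun i j h =>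
        (hchord i j h).trans (finRotate_apply i).symm, fun x hx => ?_⟩
      obtain ⟨i, -, rfl⟩ := mem_image.mp (mem_coe.mp hx)
      exact hfS i

lemma HasGirth.le_card {g : ℕ} (hg : HasGirth D g) {C : Finset V}
    (hC : IsInducedCycleSet D C) : g ≤ #C := by
  obtain ⟨h2, e, he, -⟩ := hC
  exact hg.2 _ (fun i => (e i : V)) ⟨h2, Subtype.val_injective.comp e.injective, he⟩

end Cycles

section RandomSubset

lemma Finset.exists_sum_mul_le_of_sum_eq_one {ι R : Type*} [Semiring R] [LinearOrder R]
    [IsStrictOrderedRing R] {s : Finset ι} {w : ι → R} (f : ι → R) (hw : ∀ i ∈ s, 0 ≤ w i)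
    (hw1 : ∑ i ∈ s, w i = 1) :
    ∃ i ∈ s, ∑ j ∈ s, w j * f j ≤ f i := by
  obtain ⟨i, hi, hmax⟩ :=
    s.exists_max_image f (nonempty_of_sum_ne_zero (hw1.trans_ne one_ne_zero))
  refine ⟨i, hi, ?_⟩
  calc ∑ j ∈ s, w j * f j ≤ ∑ j ∈ s, w j * f i :=
        sum_le_sum fun j hj => mul_le_mul_of_nonneg_left (hmax j hj) (hw j hj)
    _ = f i := by rw [← sum_mul, hw1, one_mul]

variable [Fintype V] [DecidableEq V]

lemma sum_superset_pow_card_mul_pow_card_compl {R : Type*} [CommSemiring R] (p q : R)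
    (C : Finset V) : ∑ S with C ⊆ S, p ^ #S * q ^ #Sᶜ = p ^ #C * (p + q) ^ #Cᶜ := by
  rw [← sum_pow_mul_eq_add_pow, mul_sum]
  refine sum_nbij' (· \ C) (C ∪ ·) (fun S hS => ?_) (fun T hT => ?_) (fun S hS => ?_)
    (fun T hT => ?_) (fun S hS => ?_)
  · simp only [mem_filter, mem_univ, true_and] at hS
    exact mem_powerset.mpr fun v hv => mem_compl.mpr (mem_sdiff.mp hv).2
  · exact mem_filter.mpr ⟨mem_univ _, subset_union_left⟩
  · exact union_sdiff_of_subset (mem_filter.mp hS).2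
  · exact union_sdiff_cancel_left
      (disjoint_of_subset_right (mem_powerset.mp hT) disjoint_compl_right)
  · have hCS := (mem_filter.mp hS).2
    have h1 : #(S \ C) + #C = #S := card_sdiff_add_card_eq_card hCS
    have h2 : #Sᶜ = #Cᶜ - #(S \ C) := by
      rw [card_compl, card_compl]; have := card_le_univ S; omega
    rw [← h1, h2, pow_add]; ring

-- the law of the random subset that contains each vertex independently with probability `p`
noncomputable def subsetWeight (p : ℝ) (S : Finset V) : ℝ := p ^ #S * (1 - p) ^ #Sᶜ

lemma subsetWeight_nonneg {p : ℝ} (hp0 : 0 ≤ p) (hp1 : p ≤ 1) (S : Finset V) :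
    0 ≤ subsetWeight p S :=
  mul_nonneg (pow_nonneg hp0 _) (pow_nonneg (sub_nonneg.mpr hp1) _)

lemma sum_subsetWeight_of_subset (p : ℝ) (C : Finset V) :
    ∑ S with C ⊆ S, subsetWeight p S = p ^ #C := by
  simp only [subsetWeight]
  rw [sum_superset_pow_card_mul_pow_card_compl, add_sub_cancel, one_pow, mul_one]

lemma sum_subsetWeight (p : ℝ) : ∑ S : Finset V, subsetWeight p S = 1 := by
  simpa using sum_subsetWeight_of_subset p (∅ : Finset V)

lemma sum_subsetWeight_mul_card_filter {ι : Type*} (p : ℝ) (s : Finset ι) (F : ι → Finset V) :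
    ∑ S, subsetWeight p S * #{i ∈ s | F i ⊆ S} = ∑ i ∈ s, p ^ #(F i) := by
  simp_rw [card_filter, Nat.cast_sum, mul_sum, Nat.cast_ite, Nat.cast_one, Nat.cast_zero,
    mul_ite, mul_one, mul_zero]
  rw [sum_comm]
  exact sum_congr rfl fun i _ => by rw [← sum_filter, sum_subsetWeight_of_subset]

lemma exists_card_sub_card_filter_subset_ge {p : ℝ} (hp0 : 0 ≤ p) (hp1 : p ≤ 1)
    (𝒞 : Finset (Finset V)) :
    ∃ S : Finset V, p * Fintype.card V - ∑ C ∈ 𝒞, p ^ #C ≤ #S - #{C ∈ 𝒞 | C ⊆ S} := by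
  obtain ⟨S, -, hS⟩ := exists_sum_mul_le_of_sum_eq_one (fun S => (#S : ℝ) - #{C ∈ 𝒞 | C ⊆ S})
    (fun S _ => subsetWeight_nonneg hp0 hp1 S) (sum_subsetWeight p)
  refine ⟨S, le_of_eq_of_le ?_ hS⟩
  have hmean : ∑ S : Finset V, subsetWeight p S * (#S : ℝ) = p * Fintype.card V := calc
    _ = ∑ S, subsetWeight p S * #{v ∈ univ | ({v} : Finset V) ⊆ S} := by
      simp
    _ = p * Fintype.card V := by
      rw [sum_subsetWeight_mul_card_filter]
      simp [mul_comm]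
  simp only [mul_sub, sum_sub_distrib, hmean, sum_subsetWeight_mul_card_filter]

end RandomSubset

lemma Finset.exists_hittingSet_card_le {α : Type*} [DecidableEq α] {𝒮 : Finset (Finset α)}
    (h𝒮 : ∀ C ∈ 𝒮, C.Nonempty) : ∃ R : Finset α, #R ≤ #𝒮 ∧ ∀ C ∈ 𝒮, ∃ v ∈ C, v ∈ R := by
  choose pick hpick using fun C : 𝒮 => h𝒮 C C.2
  exact ⟨𝒮.attach.image pick, card_image_le.trans card_attach.le,
    fun C hC => ⟨_, hpick ⟨C, hC⟩, mem_image_of_mem _ (mem_attach _ _)⟩⟩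

section InducedCycles

variable [Fintype V] (D : V → V → Prop)

open Classical in
noncomputable def inducedCycles : Finset (Finset V) := {C | IsInducedCycleSet D C}

variable {D}

lemma mem_inducedCycles {C : Finset V} : C ∈ inducedCycles D ↔ IsInducedCycleSet D C := by
  simp [inducedCycles]

lemma card_inducedCycles :
    #(inducedCycles D) = Nat.card {C : Finset V // IsInducedCycleSet D C} := by
  classical
  rw [Nat.card_eq_fintype_card, Fintype.card_subtype, inducedCycles]

lemma exists_acyclic_card_add_card_ge [DecidableEq V] (hloop : ∀ v, ¬ D v v) (S : Finset V) :
    ∃ T : Finset V, ¬ HasCycleIn D ↑T ∧ #S ≤ #T + #{C ∈ inducedCycles D | C ⊆ S} := by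
  obtain ⟨R, hR, hhit⟩ := exists_hittingSet_card_le (𝒮 := {C ∈ inducedCycles D | C ⊆ S})
    fun C hC => card_pos.mp (by have := (mem_inducedCycles.mp (mem_filter.mp hC).1).1; omega)
  refine ⟨S \ R, ?_, (card_le_card_sdiff_add_card (t := R)).trans (by omega)⟩
  rintro ⟨m, f, hf, hfT⟩
  obtain ⟨C, hC, hCT⟩ := hf.exists_isInducedCycleSet_subset hloop hfT
  have hCT' : C ⊆ S \ R := fun x hx => mem_coe.mp (hCT hx)
  obtain ⟨v, hvC, hvR⟩ :=
    hhit C (mem_filter.mpr ⟨mem_inducedCycles.mpr hC, hCT'.trans sdiff_subset⟩)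
  exact (mem_sdiff.mp (hCT' hvC)).2 hvR

end InducedCycles

lemma one_div_natCast_sub_one {g : ℕ} (hg : 1 ≤ g) :
    (1 : ℝ) / ((g : ℝ) - 1) = ((g - 1 : ℕ) : ℝ)⁻¹ := by
  rw [one_div, Nat.cast_sub hg, Nat.cast_one]

lemma rpow_one_div_natCast_sub_one_pow {x : ℝ} (hx : 0 ≤ x) {g : ℕ} (hg : 2 ≤ g) :
    (x ^ (1 / ((g : ℝ) - 1))) ^ (g - 1) = x := by
  rw [one_div_natCast_sub_one (by omega), Real.rpow_inv_natCast_pow hx (by omega)]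

lemma sub_one_div_mul_rpow_eq {n t p : ℝ} {g : ℕ} (hg : 2 ≤ g) (hn : 0 ≤ n) (ht : 0 < t)
    (hp : 0 ≤ p) (hpg : p ^ (g - 1) = n / (t * g)) :
    ((g : ℝ) - 1) / g * (n ^ g / (t * g)) ^ (1 / ((g : ℝ) - 1)) = p * n - t * p ^ g := by
  have hg0 : (g : ℝ) ≠ 0 := by positivity
  have hsucc : ∀ x : ℝ, x ^ g = x ^ (g - 1) * x := fun x => by
    rw [← pow_succ, Nat.sub_add_cancel (by omega)]
  -- `n ^ g / (t g) = (p n) ^ (g - 1)`, so its `(g - 1)`-th root is `p n`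
  have hroot : (n ^ g / (t * g)) ^ (1 / ((g : ℝ) - 1)) = p * n := by
    rw [one_div_natCast_sub_one (by omega), hsucc n, ← Real.pow_rpow_inv_natCast
      (mul_nonneg hp hn) (by omega : g - 1 ≠ 0), mul_pow, hpg]
    congr 1
    field_simp
  rw [hroot, hsucc p, hpg]
  field_simp

/-- If D has n vertices, girth g and t induced directed cycles with t·g ≥ n, then
α(D) ≥ ((g−1)/g)·(n^g/(t·g))^(1/(g−1)). -/
theorem stmt_6 {V : Type*} [Fintype V] (D : V → V → Prop) (hloopless : ∀ v, ¬ D v v)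
    (n g t : ℕ) (hn : n = Fintype.card V) (hg : HasGirth D g)
    (ht : t = Nat.card {S : Finset V // IsInducedCycleSet D S})
    (htg : n ≤ t * g) :
    ∃ S : Finset V, ¬ HasCycleIn D ↑S ∧
      ((g : ℝ) - 1) / g * (((n : ℝ) ^ g / ((t : ℝ) * g)) ^ ((1 : ℝ) / ((g : ℝ) - 1)))
        ≤ (S.card : ℝ) := by
  classical
  obtain ⟨c, hc⟩ := hg.1
  have hg2 : 2 ≤ g := hc.1
  have hgn : g ≤ n := hn ▸ by simpa using Fintype.card_le_of_injective c hc.2.1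
  have ht0 : 0 < t := Nat.pos_of_ne_zero (by rintro rfl; omega)
  have hx0 : 0 ≤ (n : ℝ) / (t * g) := by positivity
  have hx1 : (n : ℝ) / (t * g) ≤ 1 := div_le_one_of_le₀ (by exact_mod_cast htg) (by positivity)
  -- the inclusion probability that optimizes `p n - t p ^ g`
  set p := ((n : ℝ) / (t * g)) ^ (1 / ((g : ℝ) - 1))
  have hp0 : 0 ≤ p := Real.rpow_nonneg hx0 _
  have hp1 : p ≤ 1 :=
    Real.rpow_le_one hx0 hx1 (by rw [one_div_natCast_sub_one (by omega)]; positivity)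
  have hcycles : ∑ C ∈ inducedCycles D, p ^ #C ≤ t * p ^ g := calc
    _ ≤ ∑ C ∈ inducedCycles D, p ^ g :=
      sum_le_sum fun C hC => pow_le_pow_of_le_one hp0 hp1 (hg.le_card (mem_inducedCycles.mp hC))
    _ = t * p ^ g := by rw [sum_const, card_inducedCycles, ← ht, nsmul_eq_mul]
  obtain ⟨S, hS⟩ := exists_card_sub_card_filter_subset_ge hp0 hp1 (inducedCycles D)
  obtain ⟨T, hT, hST⟩ := exists_acyclic_card_add_card_ge hloopless S
  refine ⟨T, hT, ?_⟩
  have hST' : (#S : ℝ) ≤ #T + #{C ∈ inducedCycles D | C ⊆ S} := by exact_mod_cast hST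
  calc _ = p * n - t * p ^ g := sub_one_div_mul_rpow_eq hg2 (by positivity) (by positivity) hp0
        (rpow_one_div_natCast_sub_one_pow hx0 hg2)
    _ ≤ p * Fintype.card V - ∑ C ∈ inducedCycles D, p ^ #C := by rw [← hn]; linarith
    _ ≤ #T := by linarith
end

section
/- For any real p ∈ [0,1] and digraph D with n vertices, girth g, and t induced directed cycles, α(D) ≥ n·p − t·p^g. -/
variable {V : Type*}

lemma finRotate_cast {a b : ℕ} (h : a = b) (i : Fin a) :
    Fin.cast h (finRotate a i) = finRotate b (Fin.cast h i) := by
  subst h; rfl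

lemma finRotate_val {m : ℕ} (hm : 2 ≤ m) (i : Fin m) :
    (finRotate m i).val = (i.val + 1) % m := by
  obtain ⟨m, rfl⟩ : ∃ k, m = k + 1 := ⟨m - 1, by omega⟩
  rw [finRotate_succ_apply]
  simp [Fin.add_def]

/-- From an induced cycle set we get a cycle function. -/
lemma IsInducedCycleSet.cycleFun {D : V → V → Prop} {C : Finset V}
    (h : IsInducedCycleSet D C) :
    ∃ f : Fin C.card → V, IsCycleFun D f ∧ ∀ i, f i ∈ C := by
  obtain ⟨h2, e, he, -⟩ := h
  refine ⟨fun i => (e i : V), ⟨h2, ?_, fun i => he i⟩, fun i => (e i).2⟩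
  exact Subtype.val_injective.comp e.injective

/-- Shortest cycle inside `S` is induced. -/
lemma exists_induced_of_hasCycleIn [DecidableEq V] {D : V → V → Prop}
    (hloopless : ∀ v, ¬ D v v) {S : Set V} (h : HasCycleIn D S) :
    ∃ C : Finset V, IsInducedCycleSet D C ∧ ↑C ⊆ S := by
  classical
  have hex : ∃ m, ∃ f : Fin m → V, IsCycleFun D f ∧ ∀ i, f i ∈ S := h
  let m := Nat.find hex
  obtain ⟨f, ⟨hm2, hinj, hcyc⟩, hmem⟩ : ∃ f : Fin m → V, IsCycleFun D f ∧ ∀ i, f i ∈ S :=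
    Nat.find_spec hex
  have hmin : ∀ L, L < m → ¬ ∃ f : Fin L → V, IsCycleFun D f ∧ ∀ i, f i ∈ S :=
    fun L hL => Nat.find_min hex hL
  have hm0 : 0 < m := by omega
  set C : Finset V := Finset.univ.image f with hC
  have hcard : C.card = m := by
    rw [hC, Finset.card_image_of_injective _ hinj, Finset.card_univ, Fintype.card_fin]
  have hmemC : ∀ i, f i ∈ C := fun i => Finset.mem_image_of_mem f (Finset.mem_univ i)
  -- key: chords force successor
  have hchord : ∀ j k : Fin m, D (f j) (f k) → k = finRotate m j := by
    intro j k hD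
    by_contra hne
    have hjk : j ≠ k := by
      rintro rfl; exact hloopless _ hD
    have hjkv : j.val ≠ k.val := fun hv => hjk (Fin.ext hv)
    set d : ℕ := (j.val + m - k.val) % m with hd
    have hkm := k.isLt; have hjm := j.isLt
    have hd1 : 1 ≤ d := by
      rcases Nat.lt_or_ge j.val k.val with hlt | hge
      · have hx : j.val + m - k.val < m := by omega
        rw [hd, Nat.mod_eq_of_lt hx]; omega
      · have hx : j.val + m - k.val = (j.val - k.val) + m := by omega
        rw [hd, hx, Nat.add_mod_right, Nat.mod_eq_of_lt (by omega)]; omega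
    have hdm : d < m := Nat.mod_lt _ hm0
    have hdm1 : d ≠ m - 1 := by
      intro hdeq
      apply hne
      apply Fin.ext
      rw [finRotate_val hm2]
      have : (j.val + m - k.val) % m = (m - 1) % m := by
        rw [← hd, hdeq, Nat.mod_eq_of_lt (by omega)]
      -- from this derive k = (j+1) % m
      have h2 : (j.val + m - k.val + (k.val + 1)) % m = (m - 1 + (k.val + 1)) % m :=
        Nat.ModEq.add_right _ this
      have e1 : j.val + m - k.val + (k.val + 1) = j.val + 1 + m := by omega
      have e2 : m - 1 + (k.val + 1) = k.val + m := by omega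
      rw [e1, e2, Nat.add_mod_right, Nat.add_mod_right, Nat.mod_eq_of_lt hkm] at h2
      omega
    set L : ℕ := d + 1 with hL
    have hLm : L < m := by omega
    have hL2 : 2 ≤ L := by omega
    refine hmin L hLm ⟨fun i => f ⟨(k.val + i.val) % m, Nat.mod_lt _ hm0⟩, ⟨hL2, ?_, ?_⟩,
      fun i => hmem _⟩
    · intro i1 i2 hfe
      have := hinj hfe
      have hv : (k.val + i1.val) % m = (k.val + i2.val) % m := congrArg Fin.val this
      have h1 := i1.isLt; have h2 := i2.isLt
      rcases Nat.lt_or_ge (k.val + i1.val) m with ha | ha <;>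
        rcases Nat.lt_or_ge (k.val + i2.val) m with hb | hb <;>
        [skip; skip; skip; skip] <;>
      · first
        | (rw [Nat.mod_eq_of_lt ha, Nat.mod_eq_of_lt hb] at hv; exact Fin.ext (by omega))
        | (rw [Nat.mod_eq_of_lt ha, Nat.mod_eq_sub_mod hb,
              Nat.mod_eq_of_lt (by omega)] at hv; exact Fin.ext (by omega))
        | (rw [Nat.mod_eq_sub_mod ha, Nat.mod_eq_of_lt (by omega),
              Nat.mod_eq_of_lt hb] at hv; exact Fin.ext (by omega))
        | (rw [Nat.mod_eq_sub_mod ha, Nat.mod_eq_of_lt (by omega),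
              Nat.mod_eq_sub_mod hb, Nat.mod_eq_of_lt (by omega)] at hv;
            exact Fin.ext (by omega))
    · intro i
      have hiL := i.isLt
      rcases Nat.lt_or_ge i.val d with hid | hid
      · -- interior edge
        have hrot : (finRotate L i).val = i.val + 1 := by
          rw [finRotate_val hL2, Nat.mod_eq_of_lt (by omega)]
        have := hcyc ⟨(k.val + i.val) % m, Nat.mod_lt _ hm0⟩
        convert this using 2
        apply Fin.ext
        rw [finRotate_val hm2]
        simp only [hrot]
        rw [Nat.mod_add_mod, Nat.add_assoc]
      · -- last edge: i.val = d, wraps to 0, uses the chord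
        have hieq : i.val = d := by omega
        have hrot0 : (finRotate L i).val = 0 := by
          rw [finRotate_val hL2, hieq, Nat.mod_self]
        have hgj : (k.val + i.val) % m = j.val := by
          rw [hieq, hd]
          have : (k.val + (j.val + m - k.val) % m) % m
              = (k.val + (j.val + m - k.val)) % m := by
            rw [Nat.add_mod, Nat.mod_mod_of_dvd _ dvd_rfl, ← Nat.add_mod]
          rw [this]
          have : k.val + (j.val + m - k.val) = j.val + m := by omega
          rw [this, Nat.add_mod_right, Nat.mod_eq_of_lt hjm]
        have hg0 : (k.val + (finRotate L i).val) % m = k.val := by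
          rw [hrot0, Nat.add_zero, Nat.mod_eq_of_lt hkm]
        have e1 : (⟨(k.val + i.val) % m, Nat.mod_lt _ hm0⟩ : Fin m) = j := Fin.ext hgj
        have e2 : (⟨(k.val + (finRotate L i).val) % m, Nat.mod_lt _ hm0⟩ : Fin m) = k :=
          Fin.ext hg0
        simp only [e1, e2]
        exact hD
  -- build the induced cycle set
  have hbij : Function.Bijective (fun i : Fin m => (⟨f i, hmemC i⟩ : {x // x ∈ C})) := by
    rw [Fintype.bijective_iff_injective_and_card]
    constructor
    · intro a b hab
      exact hinj (congrArg Subtype.val hab)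
    · simp [Fintype.card_coe, hcard]
  let e' : Fin m ≃ {x // x ∈ C} := Equiv.ofBijective _ hbij
  have he' : ∀ i : Fin m, (e' i : V) = f i := fun i => rfl
  refine ⟨C, ⟨by rw [hcard]; exact hm2, ⟨(finCongr hcard).trans e', ?_, ?_⟩⟩, ?_⟩
  · intro i
    have h1 : ((finCongr hcard).trans e') i = e' (Fin.cast hcard i) := rfl
    have h2 : ((finCongr hcard).trans e') (finRotate C.card i)
        = e' (finRotate m (Fin.cast hcard i)) := by
      show e' (Fin.cast hcard (finRotate C.card i)) = _
      rw [finRotate_cast hcard]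
    rw [h1, h2, he', he']
    exact hcyc _
  · rintro ⟨a, ha⟩ ⟨b, hb⟩ hab
    obtain ⟨ja, -, rfl⟩ := Finset.mem_image.mp ha
    obtain ⟨jb, -, rfl⟩ := Finset.mem_image.mp hb
    have hk := hchord ja jb hab
    refine ⟨Fin.cast hcard.symm ja, ?_, ?_⟩
    · apply Subtype.ext
      show (e' (Fin.cast hcard (Fin.cast hcard.symm ja)) : V) = f ja
      rw [he']
      exact congrArg f (Fin.ext rfl)
    · apply Subtype.ext
      show (e' (Fin.cast hcard (finRotate C.card (Fin.cast hcard.symm ja))) : V) = f jb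
      rw [finRotate_cast hcard, he', hk]
      exact congrArg (fun x => f (finRotate m x)) (Fin.ext rfl)
  · intro v hv
    obtain ⟨i, -, rfl⟩ := Finset.mem_image.mp (Finset.mem_coe.mp hv)
    exact hmem i

open Finset in
lemma sum_weights {V : Type*} [DecidableEq V] (p : ℝ) (s : Finset V) :
    ∑ A ∈ s.powerset, p ^ A.card * (1 - p) ^ (s.card - A.card) = 1 := by
  have h : ∑ A ∈ s.powerset, p ^ A.card * (1 - p) ^ (s.card - A.card)
      = ∑ A ∈ s.powerset, (∏ _i ∈ A, p) * ∏ _i ∈ s \ A, (1 - p) := by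
    refine Finset.sum_congr rfl fun A hA => ?_
    rw [Finset.prod_const, Finset.prod_const, Finset.card_sdiff_of_subset (Finset.mem_powerset.mp hA)]
  rw [h, ← Finset.prod_add]
  simp

open Finset in
lemma sum_weights_filter {V : Type*} [Fintype V] [DecidableEq V] (p : ℝ) (C : Finset V) :
    ∑ A ∈ Finset.univ.powerset.filter (fun A => C ⊆ A),
      p ^ A.card * (1 - p) ^ (Fintype.card V - A.card) = p ^ C.card := by
  have key : ∑ A ∈ Finset.univ.powerset.filter (fun A => C ⊆ A),
      p ^ A.card * (1 - p) ^ (Fintype.card V - A.card)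
      = ∑ B ∈ ((Finset.univ : Finset V) \ C).powerset,
        p ^ C.card * (p ^ B.card * (1 - p) ^ (((Finset.univ : Finset V) \ C).card - B.card)) := by
    refine Finset.sum_nbij' (fun A => A \ C) (fun B => B ∪ C) ?_ ?_ ?_ ?_ ?_
    · intro A hA
      rw [Finset.mem_powerset]
      exact Finset.sdiff_subset_sdiff (Finset.subset_univ _) le_rfl
    · intro B hB
      rw [Finset.mem_filter]
      exact ⟨Finset.mem_powerset.mpr (Finset.subset_univ _), Finset.subset_union_right⟩
    · intro A hA
      exact Finset.sdiff_union_of_subset (Finset.mem_filter.mp hA).2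
    · intro B hB
      have := Finset.mem_powerset.mp hB
      rw [Finset.subset_sdiff] at this
      exact Finset.union_sdiff_cancel_right this.2
    · intro A hA
      have hCA : C ⊆ A := (Finset.mem_filter.mp hA).2
      have h1 : (A \ C).card + C.card = A.card := Finset.card_sdiff_add_card_eq_card hCA
      have h2 : ((Finset.univ : Finset V) \ C).card = Fintype.card V - C.card := by
        rw [Finset.card_sdiff_of_subset (Finset.subset_univ _), Finset.card_univ]
      have hCn : C.card ≤ Fintype.card V := by
        rw [← Finset.card_univ]; exact Finset.card_le_card (Finset.subset_univ _)
      have hAn : A.card ≤ Fintype.card V := by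
        rw [← Finset.card_univ]; exact Finset.card_le_card (Finset.subset_univ _)
      have h3 : Fintype.card V - A.card
          = ((Finset.univ : Finset V) \ C).card - (A \ C).card := by omega
      beta_reduce
      rw [← h1, pow_add]
      have h4 : Fintype.card V - ((A \ C).card + C.card)
          = ((Finset.univ : Finset V) \ C).card - (A \ C).card := by omega
      rw [h4]
      ring
  rw [key, ← Finset.mul_sum, sum_weights p ((Finset.univ : Finset V) \ C), mul_one]

/-- For any p ∈ [0,1], α(D) ≥ n·p − t·p^g, where g is the girth and t the number
of induced directed cycles of D. -/
theorem stmt_8 {V : Type*} [Fintype V] (D : V → V → Prop) (hloopless : ∀ v, ¬ D v v)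
    (n g t : ℕ) (hn : n = Fintype.card V) (hg : HasGirth D g)
    (ht : t = Nat.card {S : Finset V // IsInducedCycleSet D S})
    (p : ℝ) (hp : p ∈ Set.Icc (0 : ℝ) 1) :
    ∃ S : Finset V, ¬ HasCycleIn D ↑S ∧
      (n : ℝ) * p - (t : ℝ) * p ^ g ≤ (S.card : ℝ) := by
  classical
  obtain ⟨hp0, hp1⟩ := hp
  subst hn
  set n := Fintype.card V with hn
  set T : Finset (Finset V) := Finset.univ.filter (fun S => IsInducedCycleSet D S) with hTdef
  have hT : T.card = t := by
    rw [ht, Nat.card_eq_fintype_card, Fintype.card_subtype]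
  set P := (Finset.univ : Finset V).powerset with hPdef
  set w : Finset V → ℝ := fun A => p ^ A.card * (1 - p) ^ (n - A.card) with hwdef
  have hw0 : ∀ A, 0 ≤ w A :=
    fun A => mul_nonneg (pow_nonneg hp0 _) (pow_nonneg (by linarith) _)
  have hsum1 : ∑ A ∈ P, w A = 1 := by
    have := sum_weights p (Finset.univ : Finset V)
    rwa [Finset.card_univ] at this
  set c : Finset V → ℕ := fun A => (T.filter (fun C => C ⊆ A)).card with hcdef
  -- sum over supersets of a fixed C
  have hsup : ∀ C : Finset V, ∑ A ∈ P.filter (fun A => C ⊆ A), w A = p ^ C.card :=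
    fun C => sum_weights_filter p C
  -- E[card]
  have hE1 : ∑ A ∈ P, w A * (A.card : ℝ) = (n : ℝ) * p := by
    have hcardsum : ∀ A : Finset V, (A.card : ℝ)
        = ∑ v ∈ Finset.univ, if v ∈ A then (1:ℝ) else 0 := by
      intro A
      rw [Finset.sum_ite_mem, Finset.univ_inter, Finset.sum_const, nsmul_eq_mul, mul_one]
    calc ∑ A ∈ P, w A * (A.card : ℝ)
        = ∑ A ∈ P, ∑ v ∈ Finset.univ, w A * (if v ∈ A then (1:ℝ) else 0) := by
          refine Finset.sum_congr rfl fun A _ => ?_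
          rw [hcardsum A, Finset.mul_sum]
      _ = ∑ v ∈ Finset.univ, ∑ A ∈ P, w A * (if v ∈ A then (1:ℝ) else 0) :=
          Finset.sum_comm
      _ = ∑ v ∈ Finset.univ, (p : ℝ) := by
          refine Finset.sum_congr rfl fun v _ => ?_
          have h1 : ∑ A ∈ P, w A * (if v ∈ A then (1:ℝ) else 0)
              = ∑ A ∈ P.filter (fun A => ({v} : Finset V) ⊆ A), w A := by
            rw [Finset.sum_filter]
            refine Finset.sum_congr rfl fun A _ => ?_
            by_cases h : v ∈ A <;> simp [h, Finset.singleton_subset_iff]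
          rw [h1, hsup, Finset.card_singleton, pow_one]
      _ = (n : ℝ) * p := by
          rw [Finset.sum_const, Finset.card_univ, nsmul_eq_mul]
  -- E[number of induced cycles inside]
  have hE2 : ∑ A ∈ P, w A * (c A : ℝ) ≤ (t : ℝ) * p ^ g := by
    have hcsum : ∀ A : Finset V, (c A : ℝ)
        = ∑ C ∈ T, if C ⊆ A then (1:ℝ) else 0 := by
      intro A
      rw [hcdef]
      rw [← Finset.sum_filter]
      rw [Finset.sum_const, nsmul_eq_mul, mul_one]
    have step : ∑ A ∈ P, w A * (c A : ℝ) = ∑ C ∈ T, p ^ C.card := by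
      calc ∑ A ∈ P, w A * (c A : ℝ)
          = ∑ A ∈ P, ∑ C ∈ T, w A * (if C ⊆ A then (1:ℝ) else 0) := by
            refine Finset.sum_congr rfl fun A _ => ?_
            rw [hcsum A, Finset.mul_sum]
        _ = ∑ C ∈ T, ∑ A ∈ P, w A * (if C ⊆ A then (1:ℝ) else 0) := Finset.sum_comm
        _ = ∑ C ∈ T, p ^ C.card := by
            refine Finset.sum_congr rfl fun C _ => ?_
            have h1 : ∑ A ∈ P, w A * (if C ⊆ A then (1:ℝ) else 0)
                = ∑ A ∈ P.filter (fun A => C ⊆ A), w A := by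
              rw [Finset.sum_filter]
              refine Finset.sum_congr rfl fun A _ => ?_
              by_cases h : C ⊆ A <;> simp [h]
            rw [h1, hsup]
    rw [step]
    have hb : ∀ C ∈ T, p ^ C.card ≤ p ^ g := by
      intro C hC
      have hind : IsInducedCycleSet D C := (Finset.mem_filter.mp hC).2
      obtain ⟨f, hf, -⟩ := hind.cycleFun
      exact pow_le_pow_of_le_one hp0 hp1 (hg.2 _ f hf)
    calc ∑ C ∈ T, p ^ C.card ≤ ∑ C ∈ T, p ^ g := Finset.sum_le_sum hb
      _ = (t : ℝ) * p ^ g := by rw [Finset.sum_const, nsmul_eq_mul, hT]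
  -- there is a good outcome
  set r : ℝ := (n : ℝ) * p - (t : ℝ) * p ^ g with hrdef
  have hEF : r ≤ ∑ A ∈ P, w A * ((A.card : ℝ) - (c A : ℝ)) := by
    have : ∑ A ∈ P, w A * ((A.card : ℝ) - (c A : ℝ))
        = ∑ A ∈ P, w A * (A.card : ℝ) - ∑ A ∈ P, w A * (c A : ℝ) := by
      rw [← Finset.sum_sub_distrib]
      exact Finset.sum_congr rfl fun A _ => by ring
    rw [this, hE1]
    have := hE2
    linarith
  have hA : ∃ A ∈ P, r ≤ (A.card : ℝ) - (c A : ℝ) := by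
    by_contra hcon
    push_neg at hcon
    obtain ⟨A0, hA0, hwA0⟩ : ∃ A ∈ P, w A ≠ 0 :=
      Finset.exists_ne_zero_of_sum_ne_zero (by rw [hsum1]; norm_num)
    have hlt : ∑ A ∈ P, w A * ((A.card : ℝ) - (c A : ℝ)) < ∑ A ∈ P, w A * r := by
      refine Finset.sum_lt_sum (fun A hAP => ?_) ⟨A0, hA0, ?_⟩
      · exact mul_le_mul_of_nonneg_left (hcon A hAP).le (hw0 A)
      · exact mul_lt_mul_of_pos_left (hcon A0 hA0) (lt_of_le_of_ne (hw0 A0) (Ne.symm hwA0))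
    rw [← Finset.sum_mul, hsum1, one_mul] at hlt
    linarith
  obtain ⟨A, -, hAF⟩ := hA
  -- delete one vertex from each induced cycle inside A
  set F := T.filter (fun C => C ⊆ A) with hFdef
  have hne : ∀ C : {x // x ∈ F}, (C : Finset V).Nonempty := by
    rintro ⟨C, hC⟩
    have h2 : 2 ≤ C.card := ((Finset.mem_filter.mp (Finset.mem_filter.mp hC).1).2).1
    exact Finset.card_pos.mp (lt_of_lt_of_le (by norm_num) h2)
  set bad : Finset V := F.attach.image (fun C => (hne C).choose) with hbaddef
  have hbadA : bad ⊆ A := by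
    intro v hv
    obtain ⟨⟨C, hC⟩, -, rfl⟩ := Finset.mem_image.mp hv
    exact (Finset.mem_filter.mp hC).2 (hne ⟨C, hC⟩).choose_spec
  have hbadcard : bad.card ≤ c A := by
    calc bad.card ≤ F.attach.card := Finset.card_image_le
      _ = F.card := Finset.card_attach
  refine ⟨A \ bad, ?_, ?_⟩
  · intro hcyc
    obtain ⟨C, hCind, hCS⟩ := exists_induced_of_hasCycleIn hloopless hcyc
    have hCS' : C ⊆ A \ bad := by
      intro x hx
      exact Finset.mem_coe.mp (hCS (Finset.mem_coe.mpr hx))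
    have hCF : C ∈ F := by
      rw [hFdef, Finset.mem_filter]
      refine ⟨Finset.mem_filter.mpr ⟨Finset.mem_univ _, hCind⟩, ?_⟩
      exact hCS'.trans Finset.sdiff_subset
    have hv1 : (hne ⟨C, hCF⟩).choose ∈ C := (hne ⟨C, hCF⟩).choose_spec
    have hv2 : (hne ⟨C, hCF⟩).choose ∈ bad :=
      Finset.mem_image.mpr ⟨⟨C, hCF⟩, Finset.mem_attach _ _, rfl⟩
    have hv3 := hCS' hv1
    exact (Finset.mem_sdiff.mp hv3).2 hv2
  · have hcards : (A \ bad).card = A.card - bad.card := Finset.card_sdiff_of_subset hbadA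
    have hble : bad.card ≤ A.card := Finset.card_le_card hbadA
    have hcast : ((A \ bad).card : ℝ) = (A.card : ℝ) - (bad.card : ℝ) := by
      rw [hcards, Nat.cast_sub hble]
    rw [hcast]
    have : (bad.card : ℝ) ≤ (c A : ℝ) := Nat.cast_le.mpr hbadcard
    linarith
end

section
/- For every positive integer k, there exists a graph G with an orientation D such that the digraph chromatic number χ(D) equals the (undirected) chromatic number χ(G), and both equal k. -/
variable {V : Type*}

/-! The graph is the complete `k`-partite graph whose parts are copies of `𝔽₂^(2q)`, with the
edge between `(i, a)` and `(i', b)`, `i < i'`, pointing forward iff `a ⬝ᵥ b = 1`. Given fewer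
than `k` colours, pigeonhole yields one colour with at least `2τ` vertices in each of two parts.
If these carried no directed 4-cycle, the rows of the inner-product matrix between them would
be nested, which forces a `τ × τ` rectangle on which `a ⬝ᵥ b` is constant; Lindsey's lemma bounds
the area of such rectangles by `2^(2q) < τ²`. Taking `q = k + 1` and `τ = 2^q + 1` makes both
counts work. -/

open Finset

section Lindsey

variable {ι : Type*} [Fintype ι] [DecidableEq ι]

def zmodTwoSign : AddChar (ZMod 2) ℤ where
  toFun x := if x = 0 then 1 else -1
  map_zero_eq_one' := rfl
  map_add_eq_mul' := by decide

lemma zmodTwoSign_eq_one_iff (x : ZMod 2) : zmodTwoSign x = 1 ↔ x = 0 := by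
  revert x; decide

lemma zmodTwoSign_sq (x : ZMod 2) : zmodTwoSign x ^ 2 = 1 := by
  revert x; decide

lemma sum_zmodTwoSign_dotProduct (d : ι → ZMod 2) :
    ∑ a : ι → ZMod 2, zmodTwoSign (a ⬝ᵥ d) = if d = 0 then 2 ^ Fintype.card ι else 0 := by
  classical
  let ψ := zmodTwoSign.compAddMonoidHom
    (AddMonoidHom.mk' (· ⬝ᵥ d) fun a b => add_dotProduct a b d)
  have hψ : ψ = 0 ↔ d = 0 := by
    rw [AddChar.eq_zero_iff, ← dotProduct_eq_zero_iff]
    simp [ψ, zmodTwoSign_eq_one_iff, dotProduct_comm d]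
  simpa [ψ, hψ] using ψ.sum_eq_ite

lemma sum_sq_sum_zmodTwoSign_dotProduct (C : Finset (ι → ZMod 2)) :
    ∑ a, (∑ b ∈ C, zmodTwoSign (a ⬝ᵥ b)) ^ 2 = #C * 2 ^ Fintype.card ι := by
  calc ∑ a, (∑ b ∈ C, zmodTwoSign (a ⬝ᵥ b)) ^ 2
      = ∑ a, ∑ b ∈ C, ∑ b' ∈ C, zmodTwoSign (a ⬝ᵥ (b + b')) := by
        simp only [sq, sum_mul_sum, dotProduct_add, AddChar.map_add_eq_mul]
    _ = ∑ b ∈ C, ∑ b' ∈ C, ∑ a, zmodTwoSign (a ⬝ᵥ (b + b')) := by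
        rw [sum_comm]; exact sum_congr rfl fun _ _ => sum_comm
    _ = ∑ b ∈ C, ∑ b' ∈ C, if b = b' then 2 ^ Fintype.card ι else 0 := by
        have hneg : ∀ b' : ι → ZMod 2, -b' = b' := fun _ => funext fun _ =>
          ZMod.neg_eq_self_mod_two _
        simp only [sum_zmodTwoSign_dotProduct, add_eq_zero_iff_eq_neg, hneg]
    _ = #C * 2 ^ Fintype.card ι := by simp [sum_ite_eq]

/-- Lindsey's lemma, for a constant submatrix of the inner-product matrix. -/
theorem card_mul_card_le_of_forall_dotProduct_eq {R C : Finset (ι → ZMod 2)} {e : ZMod 2}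
    (h : ∀ a ∈ R, ∀ b ∈ C, a ⬝ᵥ b = e) : #R * #C ≤ 2 ^ Fintype.card ι := by
  set F := fun a => ∑ b ∈ C, zmodTwoSign (a ⬝ᵥ b)
  have hF : ∀ a ∈ R, F a = #C * zmodTwoSign e := fun a ha => by
    rw [← nsmul_eq_mul, ← sum_const]
    exact sum_congr rfl fun b hb => by rw [h a ha b hb]
  have key : ((#R * #C : ℕ) : ℤ) ^ 2 ≤ (#R * #C : ℕ) * 2 ^ Fintype.card ι :=
    calc ((#R * #C : ℕ) : ℤ) ^ 2 = (∑ a ∈ R, F a) ^ 2 := by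
          rw [sum_congr rfl hF, sum_const, nsmul_eq_mul, mul_pow, mul_pow, zmodTwoSign_sq]
          push_cast; ring
      _ ≤ #R * ∑ a ∈ R, F a ^ 2 := sq_sum_le_card_mul_sum_sq
      _ ≤ #R * ∑ a, F a ^ 2 :=
          mul_le_mul_of_nonneg_left (sum_le_univ_sum_of_nonneg fun a => sq_nonneg (F a))
            (by positivity)
      _ = (#R * #C : ℕ) * 2 ^ Fintype.card ι := by
          rw [sum_sq_sum_zmodTwoSign_dotProduct]; push_cast; ring
  rcases Nat.eq_zero_or_pos (#R * #C) with h0 | hpos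
  · simp [h0]
  · exact Nat.le_of_mul_le_mul_left (by rw [← sq]; exact_mod_cast key) hpos

end Lindsey

section Rectangle

lemma Finset.subset_of_subset_or_subset_of_card_le {β : Type*} {s t : Finset β}
    (h : s ⊆ t ∨ t ⊆ s) (hst : #s ≤ #t) : s ⊆ t :=
  h.elim id fun hts => (eq_of_subset_of_card_le hts hst).ge

variable {α β : Type*} (r : α → β → Prop) [DecidableRel r]

lemma exists_subset_forall_of_chain {R : Finset α} {C : Finset β} {τ : ℕ} (hR : R.Nonempty)
    (hchain : ∀ a ∈ R, ∀ a' ∈ R,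
      {b ∈ C | r a b} ⊆ {b ∈ C | r a' b} ∨ {b ∈ C | r a' b} ⊆ {b ∈ C | r a b})
    (hτ : ∀ a ∈ R, τ ≤ #{b ∈ C | r a b}) :
    ∃ C' ⊆ C, τ ≤ #C' ∧ ∀ a ∈ R, ∀ b ∈ C', r a b := by
  obtain ⟨a₀, ha₀, hmin⟩ := exists_min_image R (fun a => #{b ∈ C | r a b}) hR
  refine ⟨{b ∈ C | r a₀ b}, filter_subset _ _, hτ a₀ ha₀, fun a ha b hb => ?_⟩
  have hsub := subset_of_subset_or_subset_of_card_le (hchain a₀ ha₀ a ha) (hmin a ha)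
  exact (mem_filter.1 (hsub hb)).2

theorem exists_constant_rectangle_of_chain [DecidableEq β] {R : Finset α} {C : Finset β}
    {τ : ℕ} (hR : 2 * τ ≤ #R) (hC : 2 * τ ≤ #C)
    (hchain : ∀ a ∈ R, ∀ a' ∈ R,
      {b ∈ C | r a b} ⊆ {b ∈ C | r a' b} ∨ {b ∈ C | r a' b} ⊆ {b ∈ C | r a b}) :
    ∃ R' ⊆ R, ∃ C' ⊆ C, τ ≤ #R' ∧ τ ≤ #C' ∧
      ((∀ a ∈ R', ∀ b ∈ C', r a b) ∨ ∀ a ∈ R', ∀ b ∈ C', ¬ r a b) := by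
  rcases Nat.eq_zero_or_pos τ with rfl | hτ
  · exact ⟨∅, empty_subset _, ∅, empty_subset _, le_rfl, le_rfl, Or.inl (by simp)⟩
  have hsplit := card_filter_add_card_filter_not (s := R) (fun a => τ ≤ #{b ∈ C | r a b})
  by_cases hhigh : τ ≤ #{a ∈ R | τ ≤ #{b ∈ C | r a b}}
  · obtain ⟨C', hC'C, hC', hr⟩ := exists_subset_forall_of_chain r
      (card_pos.1 (hτ.trans_le hhigh))
      (fun a ha a' ha' => hchain a (mem_filter.1 ha).1 a' (mem_filter.1 ha').1)
      (fun a ha => (mem_filter.1 ha).2)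
    exact ⟨_, filter_subset _ _, C', hC'C, hhigh, hC', Or.inl hr⟩
  · -- the complementary rows form a chain for `¬ r`, with at least `#C - τ ≥ τ` entries each
    have hlow : τ ≤ #{a ∈ R | ¬ τ ≤ #{b ∈ C | r a b}} := by omega
    have hcompl : ∀ a, {b ∈ C | ¬ r a b} = C \ {b ∈ C | r a b} := fun a => by
      rw [filter_not]
    obtain ⟨C', hC'C, hC', hr⟩ := exists_subset_forall_of_chain (τ := τ) (fun a b => ¬ r a b)
      (card_pos.1 (hτ.trans_le hlow))
      (fun a ha a' ha' => by
        rw [hcompl a, hcompl a']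
        exact (hchain a (mem_filter.1 ha).1 a' (mem_filter.1 ha').1).symm.imp
          (sdiff_subset_sdiff subset_rfl) (sdiff_subset_sdiff subset_rfl))
      (fun a ha => by
        rw [hcompl, card_sdiff_of_subset (filter_subset _ _)]
        have := (mem_filter.1 ha).2
        omega)
    exact ⟨_, filter_subset _ _, C', hC'C, hlow, hC', Or.inr hr⟩

end Rectangle

lemma properColoring_of_forall_ne {V : Type*} {D : V → V → Prop} {k : ℕ} {c : V → Fin k}
    (h : ∀ u v, D u v → c u ≠ c v) : ProperColoring D c := by
  rintro m f ⟨hm, -, hD⟩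
  let i : Fin m := ⟨0, by omega⟩
  exact ⟨i, finRotate m i, h _ _ (hD i)⟩

section MultipartiteOrientation

variable {κ X : Type*} [LinearOrder κ] (r : X → X → Prop)

def multipartiteOrientation (u v : κ × X) : Prop :=
  (u.1 < v.1 ∧ r u.2 v.2) ∨ (v.1 < u.1 ∧ ¬ r v.2 u.2)

variable {r}

lemma multipartiteOrientation_or_swap_iff (u v : κ × X) :
    multipartiteOrientation r u v ∨ multipartiteOrientation r v u ↔ u.1 ≠ v.1 := by
  unfold multipartiteOrientation
  rcases lt_trichotomy u.1 v.1 with h | h | h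
  · simpa [h, h.ne, h.not_gt] using em _
  · simp [h]
  · simpa [h, h.ne', h.not_gt] using (em _).symm

lemma not_multipartiteOrientation_and_swap (u v : κ × X) :
    ¬ (multipartiteOrientation r u v ∧ multipartiteOrientation r v u) := by
  unfold multipartiteOrientation
  rcases lt_trichotomy u.1 v.1 with h | h | h
  · simp only [h, h.not_gt]; tauto
  · simp [h]
  · simp only [h, h.not_gt]; tauto

lemma multipartiteOrientation.fst_ne {u v : κ × X} (h : multipartiteOrientation r u v) :
    u.1 ≠ v.1 :=
  (multipartiteOrientation_or_swap_iff u v).1 (Or.inl h)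

lemma isCycleFun_multipartiteOrientation_of_crossing {i i' : κ} (hii' : i < i') {a a' b b' : X}
    (hab : r a b) (ha'b : ¬ r a' b) (ha'b' : r a' b') (hab' : ¬ r a b') :
    IsCycleFun (multipartiteOrientation r) ![(i, a), (i', b), (i, a'), (i', b')] := by
  have haa' : a ≠ a' := fun h => ha'b (h ▸ hab)
  have hbb' : b ≠ b' := fun h => hab' (h ▸ hab)
  refine ⟨by norm_num, ?_, ?_⟩
  · intro z y hzy
    fin_cases z <;> fin_cases y <;> simp_all [Prod.ext_iff, hii'.ne, eq_comm]
  · intro z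
    fin_cases z
    exacts [Or.inl ⟨hii', hab⟩, Or.inr ⟨hii', ha'b⟩, Or.inl ⟨hii', ha'b'⟩,
      Or.inr ⟨hii', hab'⟩]

end MultipartiteOrientation

section DotProductOrientation

variable {ι : Type*} [Fintype ι] [DecidableEq ι]

abbrev dotProductOrientation (κ ι : Type*) [LinearOrder κ] [Fintype ι] :
    κ × (ι → ZMod 2) → κ × (ι → ZMod 2) → Prop :=
  multipartiteOrientation fun a b => a ⬝ᵥ b = 1

theorem exists_crossing_dotProduct {R C : Finset (ι → ZMod 2)} {τ : ℕ}
    (hτ : 2 ^ Fintype.card ι < τ * τ) (hR : 2 * τ ≤ #R) (hC : 2 * τ ≤ #C) :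
    ∃ a ∈ R, ∃ a' ∈ R, ∃ b ∈ C, ∃ b' ∈ C,
      a ⬝ᵥ b = 1 ∧ a' ⬝ᵥ b ≠ 1 ∧ a' ⬝ᵥ b' = 1 ∧ a ⬝ᵥ b' ≠ 1 := by
  by_contra hno
  have hchain : ∀ a ∈ R, ∀ a' ∈ R,
      {b ∈ C | a ⬝ᵥ b = 1} ⊆ {b ∈ C | a' ⬝ᵥ b = 1} ∨
        {b ∈ C | a' ⬝ᵥ b = 1} ⊆ {b ∈ C | a ⬝ᵥ b = 1} := by
    intro a ha a' ha'
    by_contra hnc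
    simp only [not_or, not_subset, mem_filter, not_and] at hnc
    obtain ⟨⟨b, ⟨hb, hab⟩, ha'b⟩, ⟨b', ⟨hb', ha'b'⟩, hab'⟩⟩ := hnc
    exact hno ⟨a, ha, a', ha', b, hb, b', hb', hab, ha'b hb, ha'b', hab' hb'⟩
  obtain ⟨R', -, C', -, hR', hC', hconst⟩ :=
    exists_constant_rectangle_of_chain (fun a b => a ⬝ᵥ b = 1) hR hC hchain
  have hzero : ∀ x : ZMod 2, x ≠ 1 → x = 0 := by decide
  have hLindsey : #R' * #C' ≤ 2 ^ Fintype.card ι := by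
    rcases hconst with h | h
    · exact card_mul_card_le_of_forall_dotProduct_eq h
    · exact card_mul_card_le_of_forall_dotProduct_eq fun a ha b hb => hzero _ (h a ha b hb)
  have := Nat.mul_le_mul hR' hC'
  omega

theorem not_properColoring_of_two_large_parts {κ : Type*} [LinearOrder κ] {m τ : ℕ}
    {c : κ × (ι → ZMod 2) → Fin m} {i i' : κ} (hii' : i ≠ i') {t : Fin m}
    (hτ : 2 ^ Fintype.card ι < τ * τ) (hi : 2 * τ ≤ #{v | c (i, v) = t})
    (hi' : 2 * τ ≤ #{v | c (i', v) = t}) :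
    ¬ ProperColoring (dotProductOrientation κ ι) c := by
  wlog hlt : i < i' generalizing i i'
  · exact this hii'.symm hi' hi (lt_of_le_of_ne (not_lt.1 hlt) hii'.symm)
  obtain ⟨a, ha, a', ha', b, hb, b', hb', hab, ha'b, ha'b', hab'⟩ :=
    exists_crossing_dotProduct hτ hi hi'
  intro hc
  obtain ⟨z, y, hzy⟩ :=
    hc 4 _ (isCycleFun_multipartiteOrientation_of_crossing hlt hab ha'b ha'b' hab')
  have hcolor : ∀ z, c (![(i, a), (i', b), (i, a'), (i', b')] z) = t := by
    simp only [mem_filter, mem_univ, true_and] at ha ha' hb hb'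
    intro z
    fin_cases z <;> assumption
  exact hzy ((hcolor z).trans (hcolor y).symm)

theorem le_of_properColoring_dotProductOrientation {k j τ : ℕ}
    {c : Fin k × (ι → ZMod 2) → Fin j} (hc : ProperColoring (dotProductOrientation (Fin k) ι) c)
    (hτ : 2 ^ Fintype.card ι < τ * τ) (hk : k * (2 * τ) ≤ 2 ^ Fintype.card ι) : k ≤ j := by
  by_contra! hjk
  have hlarge : ∀ i : Fin k, ∃ t, 2 * τ < #{v | c (i, v) = t} := fun i => by
    obtain ⟨t, -, ht⟩ := exists_lt_card_fiber_of_mul_lt_card_of_maps_to (s := univ) (t := univ)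
      (f := fun v => c (i, v)) (n := 2 * τ) (fun _ _ => mem_univ _) (by
        simp only [card_univ, Fintype.card_fin, Fintype.card_pi, ZMod.card, prod_const]
        nlinarith)
    exact ⟨t, ht⟩
  choose f hf using hlarge
  obtain ⟨i, i', hii', hff⟩ := Fintype.exists_ne_map_eq_of_card_lt f (by simpa using hjk)
  exact not_properColoring_of_two_large_parts hii' hτ (hf i).le (hff ▸ (hf i').le) hc

end DotProductOrientation

lemma chromaticNumber_comap_top_fst {κ X : Type*} [Fintype κ] [Nonempty X] :
    ((⊤ : SimpleGraph κ).comap (Prod.fst : κ × X → κ)).chromaticNumber = Fintype.card κ := by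
  rw [← SimpleGraph.chromaticNumber_top]
  obtain ⟨x⟩ := ‹Nonempty X›
  exact le_antisymm (SimpleGraph.chromaticNumber_mono_of_hom (SimpleGraph.Hom.comap _ _))
    (SimpleGraph.chromaticNumber_mono_of_hom ⟨fun i => (i, x), id⟩)

theorem stmt_11_general (k : ℕ) :
    ∃ (W : Type) (_ : Fintype W) (G : SimpleGraph W) (D : W → W → Prop),
      (∀ a b, G.Adj a b ↔ (D a b ∨ D b a)) ∧
      (∀ a b, ¬ (D a b ∧ D b a)) ∧
      G.chromaticNumber = (k : ℕ∞) ∧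
      (∃ c : W → Fin k, ProperColoring D c) ∧
      (∀ j : ℕ, (∃ c : W → Fin j, ProperColoring D c) → k ≤ j) := by
  have hs : 2 * k + 2 ≤ 2 ^ (k + 1) := by
    have := Nat.lt_two_pow_self (n := k)
    rw [pow_succ]
    omega
  have hcard : 2 ^ Fintype.card (Fin (2 * (k + 1))) = 2 ^ (k + 1) * 2 ^ (k + 1) := by
    rw [Fintype.card_fin, two_mul, pow_add]
  refine ⟨Fin k × (Fin (2 * (k + 1)) → ZMod 2), inferInstance,
    (⊤ : SimpleGraph (Fin k)).comap Prod.fst, dotProductOrientation (Fin k) (Fin (2 * (k + 1))),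
    fun u v => ?_, not_multipartiteOrientation_and_swap,
    chromaticNumber_comap_top_fst.trans (by simp),
    ⟨Prod.fst, properColoring_of_forall_ne fun _ _ h => h.fst_ne⟩,
    fun j ⟨c, hc⟩ => le_of_properColoring_dotProductOrientation (τ := 2 ^ (k + 1) + 1) hc ?_ ?_⟩
  · simp [multipartiteOrientation_or_swap_iff]
  · rw [hcard]; nlinarith
  · rw [hcard]; nlinarith

/-- For every positive integer k, there is a graph G with an orientation D such that
χ(D) = χ(G) = k. -/
theorem stmt_11 (k : ℕ) (hk : 0 < k) :
    ∃ (W : Type) (_ : Fintype W) (G : SimpleGraph W) (D : W → W → Prop),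
      (∀ a b, G.Adj a b ↔ (D a b ∨ D b a)) ∧
      (∀ a b, ¬ (D a b ∧ D b a)) ∧
      G.chromaticNumber = (k : ℕ∞) ∧
      (∃ c : W → Fin k, ProperColoring D c) ∧
      (∀ j : ℕ, (∃ c : W → Fin j, ProperColoring D c) → k ≤ j) :=
  stmt_11_general k
end

section
/- Let D be a loopless strict digraph with n vertices and girth g ≥ 2. Then χ(D) ≤ ⌊(n−1)/(g−1)⌋ + 1. -/
variable {V : Type*}

/-- If D has n vertices and girth g ≥ 2, then χ(D) ≤ ⌊(n−1)/(g−1)⌋ + 1. -/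
theorem stmt_13 {V : Type*} [Fintype V] (D : V → V → Prop) (hloopless : ∀ v, ¬ D v v)
    (g : ℕ) (hg2 : 2 ≤ g) (hg : HasGirth D g) :
    ∃ c : V → Fin ((Fintype.card V - 1) / (g - 1) + 1), ProperColoring D c := by
  classical
  set n := Fintype.card V with hn
  set d := g - 1 with hd
  have hd1 : 1 ≤ d := by omega
  let e := Fintype.equivFin V
  refine ⟨fun v => ⟨(e v).val / d, ?_⟩, ?_⟩
  · have hv : (e v).val ≤ n - 1 := by
      have := (e v).isLt; omega
    have := Nat.div_le_div_right (c := d) hv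
    omega
  · intro m f hf
    by_contra h
    push_neg at h
    have hmg : g ≤ m := hg.2 m f hf
    have hcol : ∀ i j : Fin m, (e (f i)).val / d = (e (f j)).val / d := by
      intro i j
      exact congrArg Fin.val (h i j)
    have hr : Function.Injective (fun i : Fin m =>
        (⟨(e (f i)).val % d, Nat.mod_lt _ (by omega)⟩ : Fin d)) := by
      intro i j hij
      simp only [Fin.mk.injEq] at hij
      have hq := hcol i j
      have hval : (e (f i)).val = (e (f j)).val := by
        have h1 := Nat.div_add_mod (e (f i)).val d
        have h2 := Nat.div_add_mod (e (f j)).val d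
        rw [hq, hij] at h1
        omega
      exact hf.2.1 (e.injective (Fin.ext hval))
    have := Fintype.card_le_of_injective _ hr
    simp [Fintype.card_fin] at this
    omega
end

section
/- Let k ≥ 2 be an integer. If a loopless strict digraph D contains no directed cycle whose length is congruent to 1 modulo k, then χ(D) ≤ k. -/
variable {V : Type*}

/-!
Colour each vertex by its depth modulo `k` in a depth-first search forest of `D`. Every directed
cycle contains a back arc `u → x`, where `x` is an ancestor of `u`; the tree path from `x` to `u`
closes up with this arc to a directed cycle of length `depth u - depth x + 1`. If the original
cycle were monochromatic, then `depth u ≡ depth x [MOD k]`, so this new cycle would have length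
`≡ 1 [MOD k]`.

The forest itself is never formed: it is enough to have a labelling `ℓ` (the depth) such that
every cycle has an arc `u → x` with a `Climb` from `x` to `u`, a path on which `ℓ` increases by
one at each step.
-/

open Finset

lemma finRotate_ne_self {m : ℕ} (hm : 2 ≤ m) (i : Fin m) : finRotate m i ≠ i :=
  Equiv.Perm.mem_support.mp (by simp [support_finRotate_of_le hm])

lemma forall_of_finRotate_invariant {m : ℕ} (hm : 2 ≤ m) (P : Fin m → Prop)
    (hP : ∀ i, P i → P (finRotate m i)) {i₀ : Fin m} (h : P i₀) (j : Fin m) : P j := by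
  obtain ⟨n, rfl⟩ := ((isCycle_finRotate_of_le hm).sameCycle (finRotate_ne_self hm i₀)
    (finRotate_ne_self hm j)).exists_nat_pow_eq
  rw [Equiv.Perm.coe_pow]
  exact Function.Iterate.rec P h hP n

section Climb

variable {D : V → V → Prop}

lemma IsCycleFun.apply_finRotate_ne {m : ℕ} {f : Fin m → V} (hf : IsCycleFun D f) (i : Fin m) :
    f (finRotate m i) ≠ f i :=
  fun h => finRotate_ne_self hf.1 i (hf.2.1 h)

def Climb (D : V → V → Prop) (ℓ : V → ℕ) (S : Finset V) : V → V → Prop :=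
  Relation.ReflTransGen fun a b => a ∈ S ∧ b ∈ S ∧ D a b ∧ ℓ b = ℓ a + 1

variable {ℓ ℓ' : V → ℕ} {S S' : Finset V} {a b : V}

lemma Climb.mono (hS : S ⊆ S') (hℓ : ∀ x ∈ S, ℓ' x = ℓ x) (h : Climb D ℓ S a b) :
    Climb D ℓ' S' a b :=
  Relation.ReflTransGen.mono (fun x y ⟨hx, hy, hxy, hl⟩ =>
    ⟨hS hx, hS hy, hxy, by rw [hℓ x hx, hℓ y hy, hl]⟩) _ _ h

lemma Climb.piecewise_left [DecidableEq V] {ℓ₂ : V → ℕ} {B : Finset V} (h : Climb D ℓ S a b) :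
    Climb D (S.piecewise ℓ ℓ₂) (S ∪ B) a b :=
  h.mono subset_union_left fun _ hx => piecewise_eq_of_mem _ _ _ hx

lemma Climb.piecewise_right [DecidableEq V] {ℓ₁ : V → ℕ} {A : Finset V} (hAS : Disjoint A S)
    (h : Climb D ℓ S a b) : Climb D (A.piecewise ℓ₁ ℓ) (A ∪ S) a b :=
  h.mono subset_union_right fun _ hx =>
    piecewise_eq_of_notMem _ _ _ (disjoint_right.mp hAS hx)

lemma Climb.exists_path (h : Climb D ℓ S a b) :
    ∃ (n : ℕ) (g : ℕ → V), g 0 = a ∧ g n = b ∧ (∀ j ≤ n, ℓ (g j) = ℓ a + j) ∧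
      ∀ j < n, D (g j) (g (j + 1)) := by
  induction h with
  | refl => exact ⟨0, fun _ => a, rfl, rfl, fun j hj => by simp_all, fun j hj => by omega⟩
  | @tail b c _ hbc ih =>
    obtain ⟨n, g, hg0, hgn, hlevel, harc⟩ := ih
    refine ⟨n + 1, fun j => if j ≤ n then g j else c, by simpa using hg0, by simp, ?_, ?_⟩
    · intro j hj
      by_cases hjn : j ≤ n
      · simp [hjn, hlevel j hjn]
      · simp only [hjn, if_false]
        rw [hbc.2.2.2, ← hgn, hlevel n le_rfl]
        omega
    · intro j hj
      by_cases hjn : j < n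
      · simpa [hjn.le, Nat.succ_le_of_lt hjn] using harc j hjn
      · obtain rfl : j = n := by omega
        simpa [hgn] using hbc.2.2.1

lemma Climb.exists_cycle (h : Climb D ℓ S a b) (hba : D b a) (hne : a ≠ b) :
    ∃ n, ℓ b = ℓ a + n ∧ ∃ f : Fin (n + 1) → V, IsCycleFun D f := by
  obtain ⟨n, g, hg0, hgn, hlevel, harc⟩ := h.exists_path
  have hn : n ≠ 0 := by rintro rfl; exact hne (hg0 ▸ hgn)
  refine ⟨n, by rw [← hgn, hlevel n le_rfl], fun j => g j, by omega, ?_, fun j => ?_⟩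
  · intro i j hij
    have := (hlevel i (Nat.lt_succ_iff.mp i.2)).symm.trans
      ((congrArg ℓ hij).trans (hlevel j (Nat.lt_succ_iff.mp j.2)))
    exact Fin.ext (by omega)
  · rcases eq_or_ne j (Fin.last n) with rfl | hj
    · simpa [finRotate_last, hg0, hgn] using hba
    · have hjn : (j : ℕ) < n := Fin.val_lt_last hj
      show D (g j) (g (finRotate (n + 1) j))
      rw [coe_finRotate_of_ne_last hj]
      exact harc j hjn

end Climb

section DepthFirstSearch

variable {D : V → V → Prop} [DecidableEq V]

/-- For `ℓ` the depth in a depth-first search forest of `S`, this is the statement that every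
cycle contains a back arc `f i → f (finRotate m i)`, whose head is an ancestor of its tail. -/
def HasBackArcs (D : V → V → Prop) (ℓ : V → ℕ) (S : Finset V) : Prop :=
  ∀ (m : ℕ) (f : Fin m → V), IsCycleFun D f → (∀ i, f i ∈ S) →
    ∃ i, Climb D ℓ S (f (finRotate m i)) (f i)

lemma HasBackArcs.piecewise_union {ℓ₁ ℓ₂ : V → ℕ} {A B : Finset V} (hA : HasBackArcs D ℓ₁ A)
    (hAB : Disjoint A B) (hB : HasBackArcs D ℓ₂ B)
    (hcross : ∀ a ∈ A, ∀ b ∈ B, D a b → Climb D (A.piecewise ℓ₁ ℓ₂) (A ∪ B) b a) :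
    HasBackArcs D (A.piecewise ℓ₁ ℓ₂) (A ∪ B) := by
  intro m f hf hfAB
  by_cases hallA : ∀ i, f i ∈ A
  · obtain ⟨i, hi⟩ := hA m f hf hallA
    exact ⟨i, hi.piecewise_left⟩
  by_cases hmeetA : ∃ i, f i ∈ A
  · obtain ⟨i₀, hi₀⟩ := hmeetA
    obtain ⟨i, hi, hexit⟩ : ∃ i, f i ∈ A ∧ f (finRotate m i) ∉ A := by
      by_contra! hstay
      exact hallA (forall_of_finRotate_invariant hf.1 (fun i => f i ∈ A) hstay hi₀)
    exact ⟨i, hcross _ hi _ ((mem_union.1 (hfAB _)).resolve_left hexit) (hf.2.2 i)⟩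
  · have hallB : ∀ i, f i ∈ B := fun i =>
      (mem_union.1 (hfAB i)).resolve_left (not_exists.1 hmeetA i)
    obtain ⟨i, hi⟩ := hB m f hf hallB
    exact ⟨i, hi.piecewise_right hAB⟩

def IsOutClosed (D : V → V → Prop) (W R : Finset V) : Prop :=
  ∀ a ∈ R, ∀ b ∈ W, D a b → b ∈ R

lemma IsOutClosed.union_of_erase {W R₁ R₂ : Finset V} {v : V}
    (h₁ : IsOutClosed D (W.erase v) R₁) (h₂ : IsOutClosed D (W \ R₁) R₂) (hv : v ∈ R₂) :
    IsOutClosed D W (R₁ ∪ R₂) := by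
  intro a ha b hb hab
  rcases mem_union.1 ha with ha | ha
  · by_cases hbv : b = v
    · exact hbv ▸ mem_union_right _ hv
    · exact mem_union_left _ (h₁ a ha b (mem_erase.2 ⟨hbv, hb⟩) hab)
  · by_cases hbR₁ : b ∈ R₁
    · exact mem_union_left _ hbR₁
    · exact mem_union_right _ (h₂ a ha b (mem_sdiff.2 ⟨hb, hbR₁⟩) hab)

/-- Depth-first search from `v` inside `W`, starting at depth `d`: `R` is the set of vertices
it visits. If `v` has an out-neighbour `u ∈ W`, search from `u` in `W \ {v}` first and then
resume from `v` in what is left. -/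
theorem exists_dfs_labelling (W : Finset V) : ∀ v ∈ W, ∀ d : ℕ,
    ∃ (R : Finset V) (ℓ : V → ℕ), R ⊆ W ∧ v ∈ R ∧ IsOutClosed D W R ∧
      ℓ v = d ∧ (∀ w ∈ R, Climb D ℓ R v w) ∧ HasBackArcs D ℓ R := by
  induction W using Finset.strongInduction with
  | H W ih =>
  intro v hv d
  by_cases hout : ∃ u ∈ W.erase v, D v u
  swap
  · push Not at hout
    refine ⟨{v}, fun _ => d, by simpa, mem_singleton_self v, ?_, rfl, ?_, ?_⟩
    · intro a ha b hb hab
      rw [mem_singleton] at ha ⊢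
      subst ha
      by_contra hbv
      exact hout b (mem_erase.2 ⟨hbv, hb⟩) hab
    · intro w hw
      rw [mem_singleton.1 hw]
      exact .refl
    · intro m f hf hfv
      exact ⟨⟨0, by have := hf.1; omega⟩, by
        rw [mem_singleton.1 (hfv _), mem_singleton.1 (hfv _)]; exact .refl⟩
  obtain ⟨u, hu, hvu⟩ := hout
  obtain ⟨R₁, ℓ₁, hR₁W, huR₁, hR₁closed, hℓ₁u, hclimb₁, hback₁⟩ :=
    ih _ (erase_ssubset hv) u hu (d + 1)
  have hvR₁ : v ∉ R₁ := fun h => (mem_erase.1 (hR₁W h)).1 rfl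
  obtain ⟨R₂, ℓ₂, hR₂W, hvR₂, hR₂closed, hℓ₂v, hclimb₂, hback₂⟩ :=
    ih (W \ R₁) (sdiff_ssubset (hR₁W.trans (erase_subset v W)) ⟨u, huR₁⟩) v
      (mem_sdiff.2 ⟨hv, hvR₁⟩) d
  have hdisj : Disjoint R₁ R₂ := disjoint_of_subset_right hR₂W disjoint_sdiff
  have hRW : R₁ ∪ R₂ ⊆ W :=
    union_subset (hR₁W.trans (erase_subset v W)) (hR₂W.trans sdiff_subset)
  have hclimb : ∀ w ∈ R₁ ∪ R₂, Climb D (R₁.piecewise ℓ₁ ℓ₂) (R₁ ∪ R₂) v w := by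
    intro w hw
    rcases mem_union.1 hw with hw | hw
    · refine .head ⟨mem_union_right _ hvR₂, mem_union_left _ huR₁, hvu, ?_⟩
        (hclimb₁ w hw).piecewise_left
      rw [piecewise_eq_of_mem _ _ _ huR₁, piecewise_eq_of_notMem _ _ _ hvR₁, hℓ₁u, hℓ₂v]
    · exact (hclimb₂ w hw).piecewise_right hdisj
  refine ⟨R₁ ∪ R₂, R₁.piecewise ℓ₁ ℓ₂, hRW, mem_union_right _ hvR₂,
    hR₁closed.union_of_erase hR₂closed hvR₂, by rw [piecewise_eq_of_notMem _ _ _ hvR₁, hℓ₂v],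
    hclimb, ?_⟩
  refine hback₁.piecewise_union hdisj hback₂ fun a ha b hb hab => ?_
  -- `R₁` is closed in `W \ {v}`, so an arc from `R₁` into `R₂` ends at `v`.
  obtain rfl : b = v := by
    by_contra hbv
    have hbW : b ∈ W.erase v := mem_erase.2 ⟨hbv, (mem_sdiff.1 (hR₂W hb)).1⟩
    exact disjoint_left.1 hdisj (hR₁closed a ha b hbW hab) hb
  exact hclimb a (mem_union_left _ ha)

theorem exists_labelling_hasBackArcs (W : Finset V) : ∃ ℓ : V → ℕ, HasBackArcs D ℓ W := by
  induction W using Finset.strongInduction with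
  | H W ih =>
  rcases W.eq_empty_or_nonempty with rfl | ⟨v, hv⟩
  · exact ⟨0, fun m f hf hfW => absurd (hfW ⟨0, by have := hf.1; omega⟩) (notMem_empty _)⟩
  obtain ⟨R, ℓ₁, hRW, hvR, hRclosed, -, -, hback₁⟩ :=
    exists_dfs_labelling (D := D) W v hv 0
  obtain ⟨ℓ₂, hback₂⟩ := ih (W \ R) (sdiff_ssubset hRW ⟨v, hvR⟩)
  refine ⟨R.piecewise ℓ₁ ℓ₂, union_sdiff_of_subset hRW ▸
    hback₁.piecewise_union disjoint_sdiff hback₂ fun a ha b hb hab => ?_⟩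
  exact absurd (hRclosed a ha b (mem_sdiff.1 hb).1 hab) (mem_sdiff.1 hb).2

end DepthFirstSearch

theorem stmt_14_general {V : Type*} [Fintype V] (D : V → V → Prop)
    (k : ℕ) (hk : 2 ≤ k)
    (hcyc : ∀ (m : ℕ) (f : Fin m → V), IsCycleFun D f → ¬ m % k = 1) :
    ∃ c : V → Fin k, ProperColoring D c := by
  classical
  obtain ⟨ℓ, hℓ⟩ := exists_labelling_hasBackArcs (D := D) (univ : Finset V)
  refine ⟨fun v => ⟨ℓ v % k, Nat.mod_lt _ (by omega)⟩, fun m f hf => ?_⟩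
  by_contra! hmono
  obtain ⟨i, hclimb⟩ := hℓ m f hf fun _ => mem_univ _
  obtain ⟨n, hn, g, hg⟩ := hclimb.exists_cycle (hf.2.2 i) (hf.apply_finRotate_ne i)
  have hsame : ℓ (f i) % k = ℓ (f (finRotate m i)) % k := congrArg Fin.val (hmono _ _)
  have hnk : n ≡ 0 [MOD k] :=
    Nat.ModEq.add_left_cancel' (ℓ (f (finRotate m i))) (by rw [add_zero, ← hn]; exact hsame)
  have hlen : (n + 1) % k = (0 + 1) % k := hnk.add_right 1
  exact hcyc (n + 1) g hg (by rw [hlen, zero_add, Nat.mod_eq_of_lt hk])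

/-- If k ≥ 2 and D has no directed cycle of length ≡ 1 (mod k), then χ(D) ≤ k. -/
theorem stmt_14 {V : Type*} [Fintype V] (D : V → V → Prop) (hloopless : ∀ v, ¬ D v v)
    (k : ℕ) (hk : 2 ≤ k)
    (hcyc : ∀ (m : ℕ) (f : Fin m → V), IsCycleFun D f → ¬ m % k = 1) :
    ∃ c : V → Fin k, ProperColoring D c :=
  stmt_14_general D k hk hcyc
end

section
/- Let T be a tournament with n vertices. In P(T;x), the coefficient of x^{n−1} is zero and the coefficient of x^{n−2} equals the negative of the number of directed triangles in T. -/
variable {V : Type*}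

namespace S16

lemma isCycleSet_of_card (T : V → V → Prop) (S : Finset V) (m : ℕ) (h : S.card = m)
    (h2 : 2 ≤ m) (e : Fin m ≃ {x // x ∈ S}) (he : ∀ i, T (e i) (e (finRotate m i))) :
    IsCycleSet T S := by subst h; exact ⟨h2, e, he⟩

lemma triangle_cycleSet [DecidableEq V] (T : V → V → Prop) (a b c : V)
    (hab : a ≠ b) (hac : a ≠ c) (hbc : b ≠ c)
    (h1 : T a b) (h2 : T b c) (h3 : T c a) :
    ({a,b,c} : Finset V).card = 3 ∧ IsCycleSet T {a,b,c} := by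
  have hcard : ({a,b,c} : Finset V).card = 3 := by
    rw [Finset.card_insert_of_notMem (by simp [hab, hac]),
      Finset.card_insert_of_notMem (by simp [hbc])]
    simp
  refine ⟨hcard, ?_⟩
  have ha : a ∈ ({a,b,c} : Finset V) := by simp
  have hb : b ∈ ({a,b,c} : Finset V) := by simp
  have hc : c ∈ ({a,b,c} : Finset V) := by simp
  set g : Fin 3 → {x // x ∈ ({a,b,c} : Finset V)} := ![⟨a, ha⟩, ⟨b, hb⟩, ⟨c, hc⟩] with hg
  have hginj : Function.Injective g := by
    intro i j hij
    have hval := congrArg Subtype.val hij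
    fin_cases i <;> fin_cases j <;>
      first
        | rfl
        | (exact absurd hval (by simp [hg, hab, hac, hbc, Ne.symm hab, Ne.symm hac, Ne.symm hbc]))
  have hbij : Function.Bijective g := by
    rw [Fintype.bijective_iff_injective_and_card]
    exact ⟨hginj, by simp [hcard]⟩
  refine isCycleSet_of_card T _ 3 hcard (by norm_num) (Equiv.ofBijective g hbij) ?_
  intro i
  fin_cases i <;> simp [hg, finRotate_succ_apply] <;> assumption

lemma proper_of_noMonoTri {T : V → V → Prop}
    (hirr : ∀ v, ¬ T v v) (htour : ∀ a b : V, a ≠ b → (T a b ↔ ¬ T b a))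
    {k : ℕ} (c : V → Fin k)
    (h : ∀ a b d : V, T a b → T b d → T d a → ¬ (c a = c b ∧ c b = c d)) :
    ProperColoring T c := by
  intro m f hf
  by_contra hno
  push_neg at hno
  obtain ⟨hm, hinj, hedge⟩ := hf
  obtain ⟨m, rfl⟩ : ∃ m', m = m' + 2 := ⟨m - 2, by omega⟩
  have trans : ∀ a b d : V, c a = c b → c b = c d → T a b → T b d → T a d := by
    intro a b d hcab hcbd h1 h2
    have hab : a ≠ b := fun h => hirr _ (h ▸ h1)
    by_cases had : a = d
    · subst had; exact absurd h2 ((htour a b hab).mp h1)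
    · by_contra hnad
      have h3 : T d a := (htour d a (Ne.symm had)).mpr hnad
      exact h a b d h1 h2 h3 ⟨hcab, hcbd⟩
  have chain : ∀ j : ℕ, ∀ hj : j + 1 < m + 2, T (f 0) (f ⟨j + 1, hj⟩) := by
    intro j
    induction j with
    | zero =>
      intro hj
      have h0 := hedge 0
      have : finRotate (m + 2) 0 = ⟨1, hj⟩ := by
        rw [finRotate_succ_apply]
        ext; simp
      rwa [this] at h0
    | succ j ih =>
      intro hj
      have hj' : j + 1 < m + 2 := by omega
      have h1 := ih hj'
      have h2 := hedge ⟨j + 1, hj'⟩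
      have : finRotate (m + 2) ⟨j + 1, hj'⟩ = ⟨j + 2, hj⟩ := by
        rw [finRotate_succ_apply]
        ext
        rw [Fin.val_add_one_of_lt]
        · simp [Fin.lt_iff_val_lt_val, Fin.last]; omega
      rw [this] at h2
      exact trans _ _ _ (hno 0 ⟨j + 1, hj'⟩) (hno ⟨j + 1, hj'⟩ ⟨j + 2, hj⟩) h1 h2
  have hlast : T (f 0) (f ⟨m + 1, by omega⟩) := chain m (by omega)
  have hwrap := hedge ⟨m + 1, by omega⟩
  have : finRotate (m + 2) ⟨m + 1, by omega⟩ = 0 := by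
    rw [finRotate_succ_apply]
    ext
    have : (⟨m + 1, by omega⟩ : Fin (m + 2)) = Fin.last (m + 1) := rfl
    rw [this, Fin.last_add_one]
  rw [this] at hwrap
  have hne : f 0 ≠ f ⟨m + 1, by omega⟩ := by
    intro h
    have := hinj h
    simp [Fin.ext_iff] at this
  exact ((htour _ _ hne).mp hlast) hwrap

def rel (A : Finset (Finset V)) (x y : V) : Prop := ∃ Δ ∈ A, x ∈ Δ ∧ y ∈ Δ

def sd (A : Finset (Finset V)) : Setoid V := Relation.EqvGen.setoid (rel A)

noncomputable def q (A : Finset (Finset V)) : ℕ := Nat.card (Quotient (sd A))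

lemma card_mono (A : Finset (Finset V)) (k : ℕ) :
    Nat.card {c : V → Fin k // ∀ Δ ∈ A, ∀ x ∈ Δ, ∀ y ∈ Δ, c x = c y}
      = Nat.card (Quotient (sd A) → Fin k) := by
  apply Nat.card_congr
  refine
    { toFun := fun c => Quotient.lift c.1 ?_
      invFun := fun g => ⟨g ∘ Quotient.mk (sd A), ?_⟩
      left_inv := ?_
      right_inv := ?_ }
  · intro x y hxy
    induction hxy with
    | rel x y hr => obtain ⟨Δ, hΔ, hx, hy⟩ := hr; exact c.2 Δ hΔ x hx y hy
    | refl => rfl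
    | symm _ _ _ ih => exact ih.symm
    | trans _ _ _ _ _ ih1 ih2 => exact ih1.trans ih2
  · intro Δ hΔ x hx y hy
    exact congrArg g (Quotient.sound (Relation.EqvGen.rel x y ⟨Δ, hΔ, hx, hy⟩))
  · intro c; rfl
  · intro g; funext x; induction x using Quotient.ind; rfl

lemma card_mono' [Finite V] (A : Finset (Finset V)) (k : ℕ) :
    Nat.card {c : V → Fin k // ∀ Δ ∈ A, ∀ x ∈ Δ, ∀ y ∈ Δ, c x = c y} = k ^ q A := by
  rw [card_mono, Nat.card_fun, Nat.card_eq_fintype_card (α := Fin k), Fintype.card_fin, q]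

lemma q_empty [Fintype V] : q (∅ : Finset (Finset V)) = Fintype.card V := by
  rw [q, ← Nat.card_eq_fintype_card]
  apply Nat.card_congr
  refine
    { toFun := Quotient.lift id ?_
      invFun := Quotient.mk _
      left_inv := ?_
      right_inv := fun v => rfl }
  · intro x y hxy
    induction hxy with
    | rel x y hr => obtain ⟨Δ, hΔ, -⟩ := hr; simp at hΔ
    | refl => rfl
    | symm _ _ _ ih => exact ih.symm
    | trans _ _ _ _ _ ih1 ih2 => exact ih1.trans ih2
  · intro x; induction x using Quotient.ind; rfl

lemma sd_singleton (Δ : Finset V) (x y : V) :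
    (sd {Δ}).r x y ↔ x = y ∨ (x ∈ Δ ∧ y ∈ Δ) := by
  constructor
  · intro h
    induction h with
    | rel x y hr =>
      obtain ⟨Δ', hΔ', hx, hy⟩ := hr
      simp only [Finset.mem_singleton] at hΔ'
      subst hΔ'
      exact Or.inr ⟨hx, hy⟩
    | refl => exact Or.inl rfl
    | symm _ _ _ ih => rcases ih with h | ⟨h1, h2⟩; exacts [Or.inl h.symm, Or.inr ⟨h2, h1⟩]
    | trans x y z _ _ ih1 ih2 =>
      rcases ih1 with rfl | ⟨h1, h2⟩
      · exact ih2
      · rcases ih2 with rfl | ⟨h3, h4⟩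
        · exact Or.inr ⟨h1, h2⟩
        · exact Or.inr ⟨h1, h4⟩
  · rintro (rfl | ⟨h1, h2⟩)
    · exact Relation.EqvGen.refl x
    · exact Relation.EqvGen.rel x y ⟨Δ, Finset.mem_singleton_self Δ, h1, h2⟩

lemma q_singleton [Fintype V] [DecidableEq V] (Δ : Finset V) (h3 : Δ.card = 3) :
    q {Δ} = Fintype.card V - 2 := by
  obtain ⟨a0, ha0⟩ := Finset.card_pos.mp (by omega : 0 < Δ.card)
  have key : Nat.card (Quotient (sd {Δ})) = Nat.card {x : V // ¬ x ∈ Δ.erase a0} := by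
    apply Nat.card_congr
    refine
      { toFun := Quotient.lift
          (fun v => if hv : v ∈ Δ then ⟨a0, by simp⟩
            else ⟨v, fun hm => hv (Finset.mem_of_mem_erase hm)⟩) ?_
        invFun := fun v => Quotient.mk _ v.1
        left_inv := ?_
        right_inv := ?_ }
    · intro x y hxy
      rcases (sd_singleton Δ x y).mp hxy with rfl | ⟨h1, h2⟩
      · rfl
      · simp [h1, h2]
    · intro x
      induction x using Quotient.ind with
      | _ v =>
        rw [Quotient.lift_mk]
        split
        · next hv => exact Quotient.sound ((sd_singleton Δ a0 v).mpr (Or.inr ⟨ha0, hv⟩))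
        · rfl
    · rintro ⟨v, hv⟩
      rw [Quotient.lift_mk]
      split
      · next hvin =>
        have : v = a0 := by
          by_contra hne
          exact hv (Finset.mem_erase.mpr ⟨hne, hvin⟩)
        exact Subtype.ext this.symm
      · rfl
  rw [q, key, Nat.card_eq_fintype_card, Fintype.card_subtype_compl]
  congr 1
  rw [Fintype.card_coe, Finset.card_erase_of_mem ha0, h3]

lemma q_le [Fintype V] [DecidableEq V] (A : Finset (Finset V))
    (hA : ∀ Δ ∈ A, Δ.card = 3)
    (h2 : ∃ Δ1 ∈ A, ∃ Δ2 ∈ A, Δ1 ≠ Δ2) :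
    q A ≤ Fintype.card V - 3 := by
  obtain ⟨Δ1, hΔ1, Δ2, hΔ2, hne⟩ := h2
  obtain ⟨a, b, c, hab, hac, hbc, hΔ1e⟩ := Finset.card_eq_three.mp (hA Δ1 hΔ1)
  have hnsub : ¬ Δ2 ⊆ Δ1 := by
    intro hsub
    exact hne (Finset.eq_of_subset_of_card_le hsub (by rw [hA Δ1 hΔ1, hA Δ2 hΔ2]) ).symm
  obtain ⟨v, hv2, hv1⟩ := Finset.not_subset.mp hnsub
  have haΔ1 : a ∈ Δ1 := by rw [hΔ1e]; simp
  have hbΔ1 : b ∈ Δ1 := by rw [hΔ1e]; simp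
  have hcΔ1 : c ∈ Δ1 := by rw [hΔ1e]; simp
  have hvb : v ≠ b := fun h => hv1 (h ▸ hbΔ1)
  have hvc : v ≠ c := fun h => hv1 (h ▸ hcΔ1)
  have hva : v ≠ a := fun h => hv1 (h ▸ haΔ1)
  set bad : Finset V := {b, c, v} with hbad
  have hbadcard : bad.card = 3 := by
    rw [hbad, Finset.card_insert_of_notMem (by simp [hbc, Ne.symm hvb]),
      Finset.card_insert_of_notMem (by simp [Ne.symm hvc])]
    simp
  have hanb : a ∉ bad := by simp [hbad, hab, hac, Ne.symm hva]
  have key : ∀ t : V, ∃ s, s ∉ bad ∧ (sd A).r s t := by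
    intro t
    by_cases ht : t ∈ bad
    · rw [hbad] at ht
      simp only [Finset.mem_insert, Finset.mem_singleton] at ht
      rcases ht with rfl | rfl | rfl
      · exact ⟨a, hanb, Relation.EqvGen.rel _ _ ⟨Δ1, hΔ1, haΔ1, hbΔ1⟩⟩
      · exact ⟨a, hanb, Relation.EqvGen.rel _ _ ⟨Δ1, hΔ1, haΔ1, hcΔ1⟩⟩
      · by_cases hsub : Δ2 ⊆ bad
        · have hΔ2e : Δ2 = bad :=
            Finset.eq_of_subset_of_card_le hsub (by rw [hbadcard, hA Δ2 hΔ2])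
          have hbΔ2 : b ∈ Δ2 := by rw [hΔ2e, hbad]; simp
          exact ⟨a, hanb, Relation.EqvGen.trans _ _ _
            (Relation.EqvGen.rel _ _ ⟨Δ1, hΔ1, haΔ1, hbΔ1⟩)
            (Relation.EqvGen.rel _ _ ⟨Δ2, hΔ2, hbΔ2, hv2⟩)⟩
        · obtain ⟨w, hw2, hwb⟩ := Finset.not_subset.mp hsub
          exact ⟨w, hwb, Relation.EqvGen.rel _ _ ⟨Δ2, hΔ2, hw2, hv2⟩⟩
    · exact ⟨t, ht, Relation.EqvGen.refl t⟩
  have hsurj : Function.Surjective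
      (fun s : {x : V // ¬ x ∈ bad} => (Quotient.mk (sd A) s.1)) := by
    intro x
    induction x using Quotient.ind with
    | _ t =>
      obtain ⟨s, hs, hrel⟩ := key t
      exact ⟨⟨s, hs⟩, Quotient.sound hrel⟩
  calc q A ≤ Nat.card {x : V // ¬ x ∈ bad} := Nat.card_le_card_of_surjective _ hsurj
    _ = Fintype.card V - 3 := by
        rw [Nat.card_eq_fintype_card, Fintype.card_subtype_compl, Fintype.card_coe, hbadcard]

lemma eval_identity [Fintype V] [DecidableEq V] (T : V → V → Prop)
    (hirr : ∀ v, ¬ T v v) (htour : ∀ a b : V, a ≠ b → (T a b ↔ ¬ T b a))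
    (Tri : Finset (Finset V))
    (hTri : ∀ S : Finset V, S ∈ Tri ↔ S.card = 3 ∧ IsCycleSet T S) (k : ℕ) :
    (numColorings V T k : ℚ) =
      ∑ A ∈ Tri.powerset, (-1 : ℚ) ^ A.card * (k : ℚ) ^ q A := by
  classical
  set Mono : (V → Fin k) → Finset V → Prop :=
    fun c Δ => ∀ x ∈ Δ, ∀ y ∈ Δ, c x = c y with hMono
  have step1 : (numColorings V T k : ℚ) =
      ∑ c : V → Fin k, if ProperColoring T c then (1 : ℚ) else 0 := by
    rw [Finset.sum_boole, numColorings, Nat.card_eq_fintype_card, Fintype.card_subtype]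
  have step2 : ∀ c : V → Fin k, (if ProperColoring T c then (1 : ℚ) else 0) =
      ∏ Δ ∈ Tri, ((1 : ℚ) - if Mono c Δ then 1 else 0) := by
    intro c
    by_cases hall : ∀ Δ ∈ Tri, ¬ Mono c Δ
    · have hp : ProperColoring T c := by
        apply proper_of_noMonoTri hirr htour
        rintro a b d h1 h2 h3 ⟨e1, e2⟩
        have hab : a ≠ b := fun h => hirr _ (h ▸ h1)
        have hbd : b ≠ d := fun h => hirr _ (h ▸ h2)
        have had : a ≠ d := fun h => hirr _ (h ▸ (h ▸ h3 : T d a))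
        obtain ⟨hc3, hcyc⟩ := triangle_cycleSet T a b d hab had hbd h1 h2 h3
        refine hall {a, b, d} ((hTri _).mpr ⟨hc3, hcyc⟩) ?_
        intro x hx y hy
        have hx' : c x = c a := by
          rcases Finset.mem_insert.mp hx with rfl | hx'
          · rfl
          · rcases Finset.mem_insert.mp hx' with rfl | hx''
            · exact e1.symm
            · rw [Finset.mem_singleton.mp hx'']; exact (e1.trans e2).symm
        have hy' : c y = c a := by
          rcases Finset.mem_insert.mp hy with rfl | hy'
          · rfl
          · rcases Finset.mem_insert.mp hy' with rfl | hy''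
            · exact e1.symm
            · rw [Finset.mem_singleton.mp hy'']; exact (e1.trans e2).symm
        rw [hx', hy']
      rw [if_pos hp, Finset.prod_congr rfl (fun Δ hΔ => by rw [if_neg (hall Δ hΔ)])]
      simp
    · push_neg at hall
      obtain ⟨Δ, hΔT, hmono⟩ := hall
      have hnp : ¬ ProperColoring T c := by
        intro hp
        obtain ⟨h3, hcyc⟩ := (hTri Δ).mp hΔT
        obtain ⟨h2c, f, he⟩ := hcyc
        obtain ⟨i, j, hij⟩ := hp Δ.card (fun i => (f i : V))
          ⟨h2c, Subtype.val_injective.comp f.injective, he⟩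
        exact hij (hmono _ (f i).2 _ (f j).2)
      rw [if_neg hnp]
      refine (Finset.prod_eq_zero hΔT ?_).symm
      rw [if_pos hmono, sub_self]
  have step3 : ∀ c : V → Fin k,
      (∏ Δ ∈ Tri, ((1 : ℚ) - if Mono c Δ then 1 else 0)) =
        ∑ A ∈ Tri.powerset, (-1 : ℚ) ^ A.card *
          (if ∀ Δ ∈ A, Mono c Δ then 1 else 0) := by
    intro c
    have : ∀ Δ ∈ Tri, ((1 : ℚ) - if Mono c Δ then 1 else 0) =
        (-(if Mono c Δ then (1:ℚ) else 0)) + 1 := by intro Δ _; ring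
    rw [Finset.prod_congr rfl this, Finset.prod_add]
    refine Finset.sum_congr rfl fun A hA => ?_
    rw [Finset.prod_const_one, mul_one]
    have : ∀ Δ ∈ A, (-(if Mono c Δ then (1:ℚ) else 0)) =
        (-1) * (if Mono c Δ then (1:ℚ) else 0) := by intro Δ _; ring
    rw [Finset.prod_congr rfl this, Finset.prod_mul_distrib, Finset.prod_const,
      Finset.prod_boole]
    by_cases h : ∀ Δ ∈ A, Mono c Δ <;> simp [h]
  rw [step1, Finset.sum_congr rfl (fun c _ => (step2 c).trans (step3 c)), Finset.sum_comm]
  refine Finset.sum_congr rfl fun A _ => ?_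
  rw [← Finset.mul_sum, Finset.sum_boole]
  have hcount := card_mono' (V := V) A k
  rw [Nat.card_eq_fintype_card, Fintype.card_subtype] at hcount
  simp only [hMono]
  rw [hcount]
  push_cast
  ring

end S16

/-- For a tournament T with n vertices, the coefficient of x^(n−1) in P(T;x) is 0 and
the coefficient of x^(n−2) is minus the number of directed triangles. -/
theorem stmt_16 {V : Type*} [Fintype V] [Nonempty V] (T : V → V → Prop)
    (hirr : ∀ v, ¬ T v v) (htour : ∀ a b : V, a ≠ b → (T a b ↔ ¬ T b a))
    (n : ℕ) (hn : n = Fintype.card V)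
    (Q : Polynomial ℚ)
    (hQ : ∀ k : ℕ, 0 < k → Q.eval (k : ℚ) = (numColorings V T k : ℚ)) :
    Q.coeff (n - 1) = 0 ∧
    Q.coeff (n - 2) =
      -(Nat.card {S : Finset V // S.card = 3 ∧ IsCycleSet T S} : ℚ) := by
  classical
  set Tri : Finset (Finset V) :=
    Finset.univ.filter (fun S => S.card = 3 ∧ IsCycleSet T S) with hTridef
  have hTri : ∀ S : Finset V, S ∈ Tri ↔ S.card = 3 ∧ IsCycleSet T S := by
    intro S; simp [hTridef]
  set P : Polynomial ℚ :=
    ∑ A ∈ Tri.powerset, Polynomial.C ((-1 : ℚ) ^ A.card) * Polynomial.X ^ (S16.q A) with hP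
  have hPeval : ∀ x : ℚ, P.eval x =
      ∑ A ∈ Tri.powerset, (-1 : ℚ) ^ A.card * x ^ S16.q A := by
    intro x
    rw [hP, Polynomial.eval_finset_sum]
    simp
  have hQP : Q = P := by
    apply Polynomial.eq_of_infinite_eval_eq
    apply Set.infinite_of_injective_forall_mem (f := fun m : ℕ => ((m + 1 : ℕ) : ℚ))
    · intro a b hab
      simp only at hab
      have : (a : ℚ) + 1 = (b : ℚ) + 1 := by exact_mod_cast hab
      exact_mod_cast add_right_cancel this
    · intro m
      show Q.eval _ = P.eval _
      rw [hQ (m + 1) (Nat.succ_pos m),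
        S16.eval_identity T hirr htour Tri hTri (m + 1), hPeval]
  have hcoeff : ∀ d : ℕ, P.coeff d =
      ∑ A ∈ Tri.powerset, (-1 : ℚ) ^ A.card * (if d = S16.q A then 1 else 0) := by
    intro d
    rw [hP, Polynomial.finset_sum_coeff]
    refine Finset.sum_congr rfl fun A _ => ?_
    rw [Polynomial.coeff_C_mul, Polynomial.coeff_X_pow]
  have hn1 : 1 ≤ n := by rw [hn]; exact Fintype.card_pos
  -- basic facts about elements of Tri
  have hTricard : ∀ Δ ∈ Tri, Δ.card = 3 := fun Δ h => ((hTri Δ).mp h).1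
  have hn3 : ∀ Δ ∈ Tri, 3 ≤ n := by
    intro Δ h
    rw [hn, ← hTricard Δ h]
    exact Finset.card_le_univ Δ
  -- case analysis on the size of A for a subset A of Tri
  have hqcase : ∀ A ∈ Tri.powerset,
      (A.card = 0 ∧ S16.q A = n) ∨
      (A.card = 1 ∧ S16.q A = n - 2 ∧ 3 ≤ n) ∨
      (2 ≤ A.card ∧ S16.q A ≤ n - 3 ∧ 3 ≤ n) := by
    intro A hA
    have hsub : A ⊆ Tri := Finset.mem_powerset.mp hA
    rcases Nat.lt_or_ge A.card 1 with h | h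
    · left
      have h0 : A.card = 0 := by omega
      have : A = ∅ := Finset.card_eq_zero.mp h0
      subst this
      exact ⟨rfl, by rw [S16.q_empty, hn]⟩
    · rcases Nat.lt_or_ge A.card 2 with h2 | h2
      · right; left
        have h1 : A.card = 1 := by omega
        obtain ⟨Δ, rfl⟩ := Finset.card_eq_one.mp h1
        have hΔT : Δ ∈ Tri := hsub (Finset.mem_singleton_self Δ)
        refine ⟨h1, ?_, hn3 Δ hΔT⟩
        rw [S16.q_singleton Δ (hTricard Δ hΔT), hn]
      · right; right
        obtain ⟨Δ1, hΔ1, Δ2, hΔ2, hne⟩ := Finset.one_lt_card.mp h2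
        refine ⟨h2, ?_, hn3 Δ1 (hsub hΔ1)⟩
        rw [hn]
        exact S16.q_le A (fun Δ h => hTricard Δ (hsub h)) ⟨Δ1, hΔ1, Δ2, hΔ2, hne⟩
  constructor
  · rw [hQP, hcoeff]
    apply Finset.sum_eq_zero
    intro A hA
    rcases hqcase A hA with ⟨h0, hq⟩ | ⟨h1, hq, hn3'⟩ | ⟨h2, hq, hn3'⟩
    · rw [if_neg (by omega), mul_zero]
    · rw [if_neg (by omega), mul_zero]
    · rw [if_neg (by omega), mul_zero]
  · rw [hQP, hcoeff]
    have hterm : ∀ A ∈ Tri.powerset,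
        (-1 : ℚ) ^ A.card * (if n - 2 = S16.q A then 1 else 0) =
          -(if A.card = 1 then (1 : ℚ) else 0) := by
      intro A hA
      rcases hqcase A hA with ⟨h0, hq⟩ | ⟨h1, hq, hn3'⟩ | ⟨h2, hq, hn3'⟩
      · rw [if_neg (by omega), mul_zero, if_neg (by omega), neg_zero]
      · rw [if_pos (by omega), if_pos h1, h1]
        ring
      · rw [if_neg (by omega), mul_zero, if_neg (by omega), neg_zero]
    rw [Finset.sum_congr rfl hterm, Finset.sum_neg_distrib, Finset.sum_boole]
    have hfilter : (Tri.powerset.filter (fun A => A.card = 1)).card = Tri.card := by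
      rw [← Finset.powersetCard_eq_filter, Finset.card_powersetCard, Nat.choose_one_right]
    rw [hfilter]
    congr 1
    rw [Nat.card_eq_fintype_card, Fintype.card_subtype]
end

section
/- Let S_n be the tournament on vertices v_1,...,v_n obtained from the transitive tournament (where v_i beats v_j iff i > j, i.e., out-neighbors of v_i are v_1,...,v_{i−1}) by reversing the edges of the Hamiltonian path v_n, v_{n−1}, ..., v_1. Then its dichromatic polynomial satisfies P(S_n; x) = Σ_{i=1}^n binom(i, n−i) · x · (x−1)^{i−1}. Equivalently, P(S_1;x) = x, P(S_2;x) = x², and P(S_n;x) = (x−1)(P(S_{n−1};x) + P(S_{n−2};x)) for n ≥ 3. -/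
variable {V : Type*}

/-- The tournament Sₙ: vᵢ → vⱼ for j < i − 1 (transitive edges) together with the
reversed Hamiltonian path edges vᵢ → vᵢ₊₁ (0-indexed on Fin n). -/
def SnAdj (n : ℕ) (a b : Fin n) : Prop := b.1 + 1 < a.1 ∨ a.1 + 1 = b.1

/-! A colouring of `Sₙ` is proper iff no three consecutive vertices `vᵢ, vᵢ₊₁, vᵢ₊₂` share a
colour: such a triple is a directed triangle, and every directed cycle contains one, namely its
vertex of largest index together with the two vertices preceding it on the cycle (an arc that
does not go up by one goes down by at least two). Splitting the colourings with no three in a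
row according to whether the first two colours agree gives
`P(Sₙ₊₃) = (k - 1) (P(Sₙ₊₂) + P(Sₙ₊₁))`, and Pascal's rule shows that the sum of binomial
coefficients satisfies the same recursion. -/

def NoThreeInARow {α : Type*} {n : ℕ} (c : Fin n → α) : Prop :=
  ∀ i (h : i + 2 < n), ¬(c ⟨i, by omega⟩ = c ⟨i + 1, by omega⟩ ∧ c ⟨i + 1, by omega⟩ = c ⟨i + 2, h⟩)

namespace SnAdj

theorem val_add_one_eq_of_le {n : ℕ} {a b : Fin n} (h : SnAdj n a b) (hab : a ≤ b) :
    a.1 + 1 = b.1 :=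
  h.resolve_left fun h' => by simp only [Fin.le_def] at hab; omega

theorem isCycleFun_triangle {n : ℕ} (i : ℕ) (h : i + 2 < n) :
    IsCycleFun (SnAdj n) (fun t : Fin 3 => (⟨i + t, by omega⟩ : Fin n)) := by
  refine ⟨by norm_num, fun s t hst => Fin.ext (by simpa using congrArg Fin.val hst), fun t => ?_⟩
  fin_cases t <;> simp [SnAdj]

theorem exists_consecutive_of_isCycleFun {n m : ℕ} {f : Fin m → Fin n}
    (hf : IsCycleFun (SnAdj n) f) :
    ∃ i j l : Fin m, (f i).1 + 1 = (f j).1 ∧ (f j).1 + 1 = (f l).1 := by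
  obtain ⟨hm, -, hedge⟩ := hf
  have : Nonempty (Fin m) := ⟨⟨0, by omega⟩⟩
  obtain ⟨l, hl⟩ := Finite.exists_max f
  set j := (finRotate m).symm l
  set i := (finRotate m).symm j
  have hjl : (f j).1 + 1 = (f l).1 := by
    have := hedge j
    rw [Equiv.apply_symm_apply] at this
    exact this.val_add_one_eq_of_le (hl j)
  refine ⟨i, j, l, ?_, hjl⟩
  have hij := hedge i
  rw [Equiv.apply_symm_apply] at hij
  have := Fin.le_def.mp (hl i)
  exact hij.resolve_left (by omega)

end SnAdj

theorem properColoring_snAdj_iff {n k : ℕ} (c : Fin n → Fin k) :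
    ProperColoring (SnAdj n) c ↔ NoThreeInARow c := by
  constructor
  · rintro hc i hi ⟨h01, h12⟩
    obtain ⟨s, t, hst⟩ := hc 3 _ (SnAdj.isCycleFun_triangle i hi)
    have hconst : ∀ t : Fin 3, c ⟨i + t, by omega⟩ = c ⟨i, by omega⟩ := by
      intro t
      fin_cases t
      exacts [rfl, h01.symm, (h01.trans h12).symm]
    exact hst ((hconst s).trans (hconst t).symm)
  · intro hc m f hf
    by_contra! hmono
    obtain ⟨i, j, l, hij, hjl⟩ := SnAdj.exists_consecutive_of_isCycleFun hf
    have hl := (f l).2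
    refine hc (f i) (by omega) ⟨?_, ?_⟩
    · rw [show (⟨(f i).1 + 1, _⟩ : Fin n) = f j from Fin.ext hij]
      exact hmono i j
    · rw [show (⟨(f i).1 + 1, _⟩ : Fin n) = f j from Fin.ext hij,
        show (⟨(f i).1 + 2, _⟩ : Fin n) = f l from Fin.ext (show (f i).1 + 2 = (f l).1 by omega)]
      exact hmono j l

namespace NoThreeInARow

variable {α : Type*} {n : ℕ}

theorem of_lt_three {c : Fin n → α} (hn : n < 3) : NoThreeInARow c :=
  fun _ h => absurd h (by omega)

theorem tail {c : Fin (n + 1) → α} (hc : NoThreeInARow c) : NoThreeInARow (Fin.tail c) :=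
  fun i hi => hc (i + 1) (by omega)

theorem cons {x : α} {d : Fin (n + 1) → α} (hd : NoThreeInARow d) (hx : x ≠ d 0) :
    NoThreeInARow (Fin.cons x d : Fin (n + 2) → α) := by
  rintro (_ | i) hi
  · exact fun h => hx h.1
  · exact hd i (by omega)

theorem cons_head {d : Fin (n + 2) → α} (hd : NoThreeInARow d) (h01 : d 0 ≠ d 1) :
    NoThreeInARow (Fin.cons (d 0) d : Fin (n + 3) → α) := by
  rintro (_ | i) hi
  · exact fun h => h01 h.2
  · exact hd i (by omega)

def headNeEquiv :
    {c : {c : Fin (n + 2) → α // NoThreeInARow c} // c.1 0 ≠ c.1 1} ≃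
      Σ d : {d : Fin (n + 1) → α // NoThreeInARow d}, {x : α // x ≠ d.1 0} where
  toFun c := ⟨⟨Fin.tail c.1.1, c.1.2.tail⟩, ⟨c.1.1 0, c.2⟩⟩
  invFun p := ⟨⟨Fin.cons p.2.1 p.1.1, p.1.2.cons p.2.2⟩, p.2.2⟩
  left_inv c := Subtype.ext (Subtype.ext (Fin.cons_self_tail c.1.1))
  right_inv _ := rfl

def headEqEquiv :
    {c : {c : Fin (n + 3) → α // NoThreeInARow c} // c.1 0 = c.1 1} ≃
      {d : {d : Fin (n + 2) → α // NoThreeInARow d} // d.1 0 ≠ d.1 1} where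
  toFun c := ⟨⟨Fin.tail c.1.1, c.1.2.tail⟩, fun h => c.1.2 0 (by omega) ⟨c.2, h⟩⟩
  invFun d := ⟨⟨Fin.cons (d.1.1 0) d.1.1, d.1.2.cons_head d.2⟩, rfl⟩
  left_inv c := Subtype.ext (Subtype.ext (by
    conv_rhs => rw [← Fin.cons_self_tail c.1.1, c.2]
    rfl))
  right_inv _ := rfl

end NoThreeInARow

section Counting

variable (α : Type*) [Fintype α]

theorem card_noThreeInARow_headNe (n : ℕ) :
    Nat.card {c : {c : Fin (n + 2) → α // NoThreeInARow c} // c.1 0 ≠ c.1 1} =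
      (Fintype.card α - 1) * Nat.card {d : Fin (n + 1) → α // NoThreeInARow d} := by
  classical
  rw [Nat.card_congr NoThreeInARow.headNeEquiv, Nat.card_sigma]
  simp [Nat.card_eq_fintype_card, Fintype.card_subtype_compl, mul_comm]

theorem card_noThreeInARow_add_three (n : ℕ) :
    Nat.card {c : Fin (n + 3) → α // NoThreeInARow c} =
      (Fintype.card α - 1) * (Nat.card {c : Fin (n + 2) → α // NoThreeInARow c} +
        Nat.card {c : Fin (n + 1) → α // NoThreeInARow c}) := by
  classical
  rw [← Nat.card_congr (Equiv.sumCompl fun c => c.1 0 = c.1 1), Nat.card_sum,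
    Nat.card_congr NoThreeInARow.headEqEquiv, card_noThreeInARow_headNe,
    card_noThreeInARow_headNe]
  ring

end Counting

open Finset

section Compositions

variable {R : Type*} [CommSemiring R]

/-- Compositions of `m` into parts `1` and `2`, one with `i + 1` parts weighted by `b ^ i`
(there are `(i + 1).choose (m - (i + 1))` of those). -/
def weightedCompositions (b : R) (m : ℕ) : R :=
  ∑ i ∈ range m, ((i + 1).choose (m - (i + 1)) : R) * b ^ i

theorem weightedCompositions_one (b : R) : weightedCompositions b 1 = 1 := by
  simp [weightedCompositions]

theorem weightedCompositions_two (b : R) : weightedCompositions b 2 = 1 + b := by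
  simp [weightedCompositions, sum_range_succ]

theorem weightedCompositions_add_three (b : R) (n : ℕ) :
    weightedCompositions b (n + 3) =
      b * (weightedCompositions b (n + 2) + weightedCompositions b (n + 1)) := by
  have pascal : ∀ i ∈ range (n + 1),
      ((i + 1 + 1).choose (n + 3 - (i + 1 + 1)) : R) * b ^ (i + 1) =
        b * (((i + 1).choose (n + 2 - (i + 1)) : R) * b ^ i +
          ((i + 1).choose (n + 1 - (i + 1)) : R) * b ^ i) := by
    intro i hi
    have hin : i ≤ n := Nat.lt_succ_iff.mp (mem_range.mp hi)
    rw [show n + 3 - (i + 1 + 1) = n - i + 1 by omega, Nat.choose_succ_succ',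
      show n + 2 - (i + 1) = n - i + 1 by omega, show n + 1 - (i + 1) = n - i by omega]
    push_cast
    ring
  rw [weightedCompositions, sum_range_succ', sum_range_succ, sum_congr rfl pascal, ← mul_sum,
    sum_add_distrib, weightedCompositions, weightedCompositions, sum_range_succ _ (n + 1),
    Nat.choose_eq_zero_of_lt (show 0 + 1 < n + 3 - (0 + 1) by omega)]
  simp only [Nat.reduceSubDiff, tsub_self, Nat.choose_zero_right, Nat.cast_one, one_mul,
    Nat.cast_zero, pow_zero, mul_one, add_zero]
  ring

end Compositions

theorem sum_Icc_choose_mul_pow (k n : ℕ) :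
    ∑ i ∈ Icc 1 n, i.choose (n - i) * (k * (k - 1) ^ (i - 1)) =
      k * weightedCompositions (k - 1) n := by
  rw [weightedCompositions, mul_sum, ← Ico_add_one_right_eq_Icc, sum_Ico_eq_sum_range,
    Nat.add_sub_cancel]
  refine sum_congr rfl fun i _ => ?_
  rw [add_comm 1 i, Nat.add_sub_cancel, Nat.cast_id]
  ring

theorem card_noThreeInARow (α : Type*) [Fintype α] (n : ℕ) :
    Nat.card {c : Fin (n + 1) → α // NoThreeInARow c} =
      Fintype.card α * weightedCompositions (Fintype.card α - 1) (n + 1) := by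
  have card_short : ∀ m < 3, Nat.card {c : Fin m → α // NoThreeInARow c} = Fintype.card α ^ m :=
    fun m hm => by
      rw [Nat.card_congr (Equiv.subtypeUnivEquiv fun _ => NoThreeInARow.of_lt_three hm)]
      simp [Nat.card_eq_fintype_card]
  induction n using Nat.twoStepInduction with
  | zero => simp [card_short, weightedCompositions_one]
  | one =>
    rw [card_short 2 (by norm_num), weightedCompositions_two]
    rcases Nat.eq_zero_or_pos (Fintype.card α) with h | h
    · simp [h]
    · rw [show 1 + (Fintype.card α - 1) = Fintype.card α by omega, sq]
  | more n ih₁ ih₂ =>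
    rw [card_noThreeInARow_add_three, ih₁, ih₂, weightedCompositions_add_three]
    ring

theorem stmt_17_general (n : ℕ) (hn : 1 ≤ n) (k : ℕ) :
    numColorings (Fin n) (SnAdj n) k =
      ∑ i ∈ Finset.Icc 1 n, Nat.choose i (n - i) * (k * (k - 1) ^ (i - 1)) := by
  obtain ⟨m, rfl⟩ := Nat.exists_eq_add_of_le' hn
  rw [numColorings, Nat.card_congr (Equiv.subtypeEquivRight properColoring_snAdj_iff),
    card_noThreeInARow, Fintype.card_fin, sum_Icc_choose_mul_pow]

/-- P(Sₙ;k) = Σ_{i=1}^n C(i, n−i) · k · (k−1)^(i−1). -/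
theorem stmt_17 (n : ℕ) (hn : 1 ≤ n) (k : ℕ) (hk : 1 ≤ k) :
    numColorings (Fin n) (SnAdj n) k =
      ∑ i ∈ Finset.Icc 1 n, Nat.choose i (n - i) * (k * (k - 1) ^ (i - 1)) :=
  stmt_17_general n hn k
end

section
/- Let T be a strongly connected tournament on n ≥ 2 vertices that contains an edge e = uv such that every directed cycle of T contains e. Then T is isomorphic to D_n with u corresponding to v_n and v to v_1; i.e., T − e is acyclic with topological order v, ..., u, and T is the transitive tournament plus the single back edge from the sink to the source. -/
/-!
Every cycle of `T` uses the edge `u → v`. Closing a shortest path `x ⇝ u` with an edge `u → x`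
gives a cycle whose only edge leaving `u` is `u → x`, so `v` is the only out-neighbour of `u`;
dually, `u` is the only in-neighbour of `v`. Hence reversing `u → v` turns `v` into a source and
`u` into a sink, and since no directed triangle avoids `u`, the reversed tournament is transitive:
it is a linear order `v < ⋯ < u`, and numbering it by `Fin n` identifies `T` with `Dₙ`.
-/

variable {V : Type*}

/-- The tournament Dₙ (0-indexed on Fin n). -/
def DnAdj (n : ℕ) (a b : Fin n) : Prop :=
  (a.1 < b.1 ∧ ¬ (a.1 = 0 ∧ b.1 = n - 1)) ∨ (a.1 = n - 1 ∧ b.1 = 0)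

open Relation Function

def IsPathFun (D : V → V → Prop) {m : ℕ} (f : Fin (m + 1) → V) : Prop :=
  Injective f ∧ ∀ i : Fin m, D (f i.castSucc) (f i.succ)

theorem exists_isPathFun_of_reflTransGen {D : V → V → Prop} {a b : V}
    (h : ReflTransGen D a b) :
    ∃ (m : ℕ) (f : Fin (m + 1) → V), IsPathFun D f ∧ f 0 = a ∧ f (Fin.last m) = b := by
  induction h with
  | refl =>
    exact ⟨0, fun _ => a, ⟨injective_of_subsingleton (α := Fin 1) _, Fin.elim0⟩, rfl, rfl⟩
  | @tail b c _ hbc ih =>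
    obtain ⟨m, f, ⟨hinj, hadj⟩, hf0, hfm⟩ := ih
    by_cases hc : c ∈ Set.range f
    · obtain ⟨k, rfl⟩ := hc
      refine ⟨k, f ∘ Fin.castLE k.isLt, ⟨hinj.comp (Fin.castLE_injective _), fun i => ?_⟩,
        hf0, congrArg f (Fin.ext rfl)⟩
      exact hadj ⟨i, by omega⟩
    · refine ⟨m + 1, Fin.snoc f c, ⟨Fin.snoc_injective_of_injective hinj hc, fun i => ?_⟩,
        by simpa using hf0, by simp⟩
      induction i using Fin.lastCases with
      | last => simpa [hfm] using hbc
      | cast j => rw [Fin.succ_castSucc, Fin.snoc_castSucc, Fin.snoc_castSucc]; exact hadj j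

theorem IsPathFun.isCycleFun {D : V → V → Prop} {m : ℕ} {f : Fin (m + 1) → V}
    (hf : IsPathFun D f) (hm : 1 ≤ m) (hclose : D (f (Fin.last m)) (f 0)) : IsCycleFun D f := by
  refine ⟨by omega, hf.1, fun i => ?_⟩
  induction i using Fin.lastCases with
  | last => rwa [finRotate_last]
  | cast j => rw [finRotate_apply, Fin.coeSucc_eq_succ]; exact hf.2 j

def EdgeOnAllCycles (D : V → V → Prop) (u v : V) : Prop :=
  ∀ (m : ℕ) (f : Fin m → V), IsCycleFun D f →
    ∃ i : Fin m, f i = u ∧ f (finRotate m i) = v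

namespace EdgeOnAllCycles

variable {D : V → V → Prop} {u v : V}

theorem of_isPathFun (hall : EdgeOnAllCycles D u v) {m : ℕ} {f : Fin (m + 1) → V}
    (hf : IsPathFun D f) (hm : 1 ≤ m) (hclose : D (f (Fin.last m)) (f 0)) :
    (f (Fin.last m) = u ∧ f 0 = v) ∨ ∃ i : Fin m, f i.castSucc = u ∧ f i.succ = v := by
  obtain ⟨i, hiu, hiv⟩ := hall _ f (hf.isCycleFun hm hclose)
  induction i using Fin.lastCases with
  | last => exact .inl ⟨hiu, by rwa [finRotate_last] at hiv⟩
  | cast j => exact .inr ⟨j, hiu, by rwa [finRotate_apply, Fin.coeSucc_eq_succ] at hiv⟩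

theorem eq_of_adj_left (hall : EdgeOnAllCycles D u v) (hirr : ∀ a, ¬D a a) {x : V}
    (hxu : ReflTransGen D x u) (hux : D u x) : x = v := by
  have hne : x ≠ u := by rintro rfl; exact hirr x hux
  obtain ⟨m, f, hf, hf0, hfm⟩ := exists_isPathFun_of_reflTransGen hxu
  have hm : 1 ≤ m := Nat.one_le_iff_ne_zero.2 (by rintro rfl; exact hne (hf0.symm.trans hfm))
  rcases hall.of_isPathFun hf hm (by rwa [hfm, hf0]) with ⟨-, h⟩ | ⟨i, hiu, -⟩
  · rwa [hf0] at h
  · exact absurd (hf.1 (hiu.trans hfm.symm)) (Fin.castSucc_lt_last i).ne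

theorem eq_of_adj_right (hall : EdgeOnAllCycles D u v) (hirr : ∀ a, ¬D a a) {x : V}
    (hvx : ReflTransGen D v x) (hxv : D x v) : x = u := by
  have hne : v ≠ x := by rintro rfl; exact hirr v hxv
  obtain ⟨m, f, hf, hf0, hfm⟩ := exists_isPathFun_of_reflTransGen hvx
  have hm : 1 ≤ m := Nat.one_le_iff_ne_zero.2 (by rintro rfl; exact hne (hf0.symm.trans hfm))
  rcases hall.of_isPathFun hf hm (by rwa [hfm, hf0]) with ⟨h, -⟩ | ⟨i, -, hiv⟩
  · rwa [hfm] at h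
  · exact absurd (hf.1 (hiv.trans hf0.symm)) (Fin.succ_ne_zero i)

theorem mem_of_triangle (hall : EdgeOnAllCycles D u v) (hirr : ∀ a, ¬D a a) {a b c : V}
    (hab : D a b) (hbc : D b c) (hca : D c a) : u = a ∨ u = b ∨ u = c := by
  have hf : IsPathFun D ![a, b, c] := by
    refine ⟨?_, fun i => by fin_cases i <;> assumption⟩
    have := hirr a; have := hirr b; have := hirr c
    intro i j h
    fin_cases i <;> fin_cases j <;> simp_all
  rcases hall.of_isPathFun hf (by norm_num) hca with ⟨h, -⟩ | ⟨i, hiu, -⟩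
  · exact .inr (.inr h.symm)
  · fin_cases i
    · exact .inl hiu.symm
    · exact .inr (.inl hiu.symm)

end EdgeOnAllCycles

def reverseEdge (D : V → V → Prop) (u v a b : V) : Prop :=
  (D a b ∧ ¬(a = u ∧ b = v)) ∨ (a = v ∧ b = u)

section reverseEdge

variable {D : V → V → Prop} {u v : V}

theorem reverseEdge_reverseEdge (huv : D u v) (hvu : ¬D v u) :
    reverseEdge (reverseEdge D u v) v u = D := by
  ext a b
  unfold reverseEdge
  constructor
  · rintro (⟨(⟨h, -⟩ | ⟨rfl, rfl⟩), h'⟩ | ⟨rfl, rfl⟩)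
    exacts [h, absurd ⟨rfl, rfl⟩ h', huv]
  · intro h
    by_cases hab : a = u ∧ b = v
    · exact .inr hab
    · refine .inl ⟨.inl ⟨h, hab⟩, ?_⟩
      rintro ⟨rfl, rfl⟩
      exact hvu h

theorem reverseEdge_source (htour : ∀ a b, a ≠ b → (D a b ↔ ¬D b a))
    (hin : ∀ x, D x v → x = u) {x : V} (hx : x ≠ v) :
    reverseEdge D u v v x := by
  by_cases hvx : D v x
  · exact .inl ⟨hvx, fun h => hx h.2⟩
  · exact .inr ⟨rfl, hin x ((htour x v hx).2 hvx)⟩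

theorem reverseEdge_sink (htour : ∀ a b, a ≠ b → (D a b ↔ ¬D b a))
    (hout : ∀ x, D u x → x = v) {x : V} (hx : x ≠ u) :
    reverseEdge D u v x u := by
  by_cases hxu : D x u
  · exact .inl ⟨hxu, fun h => hx h.1⟩
  · exact .inr ⟨hout x ((htour u x hx.symm).2 hxu), rfl⟩

theorem not_reverseEdge_source (huv : u ≠ v) (hin : ∀ x, D x v → x = u) {x : V} :
    ¬reverseEdge D u v x v := by
  rintro (⟨hxv, hne⟩ | ⟨-, rfl⟩)
  exacts [hne ⟨hin x hxv, rfl⟩, huv rfl]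

theorem not_reverseEdge_sink (huv : u ≠ v) (hout : ∀ x, D u x → x = v) {x : V} :
    ¬reverseEdge D u v u x := by
  rintro (⟨hux, hne⟩ | ⟨h, -⟩)
  exacts [hne ⟨rfl, hout x hux⟩, huv h]

theorem reverseEdge_trans (hirr : ∀ a, ¬D a a) (htour : ∀ a b, a ≠ b → (D a b ↔ ¬D b a))
    (huv : u ≠ v) (hout : ∀ x, D u x → x = v) (hin : ∀ x, D x v → x = u)
    (htri : ∀ a b c, D a b → D b c → D c a → u = a ∨ u = b ∨ u = c) {a b c : V}
    (hab : reverseEdge D u v a b) (hbc : reverseEdge D u v b c) : reverseEdge D u v a c := by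
  by_cases hcu : c = u
  · subst hcu
    exact reverseEdge_sink htour hout fun hau => not_reverseEdge_sink huv hout (hau ▸ hab)
  by_cases hav : a = v
  · subst hav
    exact reverseEdge_source htour hin fun hcv => not_reverseEdge_source huv hin (hcv ▸ hbc)
  have hbu : b ≠ u := by rintro rfl; exact not_reverseEdge_sink huv hout hbc
  have hbv : b ≠ v := by rintro rfl; exact not_reverseEdge_source huv hin hab
  have hau : a ≠ u := by rintro rfl; exact not_reverseEdge_sink huv hout hab
  obtain ⟨hab, -⟩ := hab.resolve_right fun h => hbu h.2
  obtain ⟨hbc, -⟩ := hbc.resolve_right fun h => hbv h.1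
  refine .inl ⟨?_, fun h => hau h.1⟩
  by_contra hac
  have hne : a ≠ c := by rintro rfl; exact (htour a b (fun h => hirr a (h ▸ hab))).1 hab hbc
  rcases htri a b c hab hbc ((htour c a hne.symm).2 hac) with h | h | h
  exacts [hau h.symm, hbu h.symm, hcu h.symm]

theorem isStrictTotalOrder_reverseEdge (hirr : ∀ a, ¬D a a)
    (htour : ∀ a b, a ≠ b → (D a b ↔ ¬D b a)) (huv : u ≠ v)
    (hout : ∀ x, D u x → x = v) (hin : ∀ x, D x v → x = u)
    (htri : ∀ a b c, D a b → D b c → D c a → u = a ∨ u = b ∨ u = c) :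
    IsStrictTotalOrder V (reverseEdge D u v) := by
  have hrev : ∀ {a b}, D a b → reverseEdge D u v a b ∨ reverseEdge D u v b a := by
    intro a b hab
    by_cases h : a = u ∧ b = v
    exacts [.inr (.inr h.symm), .inl (.inl ⟨hab, h⟩)]
  have irrefl : ∀ a, ¬reverseEdge D u v a a := by
    rintro a (⟨h, -⟩ | ⟨rfl, h⟩)
    exacts [hirr a h, huv h.symm]
  have trichotomous : ∀ a b, ¬reverseEdge D u v a b → ¬reverseEdge D u v b a → a = b := by
    intro a b hab hba
    by_contra hne
    rcases (em (D a b)).imp_right (htour b a (Ne.symm hne)).2 with h | h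
    exacts [(hrev h).elim hab hba, (hrev h).elim hba hab]
  exact { irrefl, trichotomous, trans _ _ _ := reverseEdge_trans hirr htour huv hout hin htri }

end reverseEdge

section FinEquiv

variable {α : Type*}

theorem exists_equiv_fin_of_isStrictTotalOrder [Fintype α] {n : ℕ} (h : Fintype.card α = n)
    (r : α → α → Prop) [IsStrictTotalOrder α r] :
    ∃ e : α ≃ Fin n, ∀ a b, r a b ↔ e a < e b := by
  classical
  let := linearOrderOfSTO r
  let e := (monoEquivOfFin α h).symm
  exact ⟨e.toEquiv, fun _ _ => e.lt_iff_lt.symm⟩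

variable {n : ℕ} {r : α → α → Prop} {e : α ≃ Fin n}

theorem val_eq_zero_of_forall_rel (he : ∀ a b, r a b ↔ e a < e b) {v : α}
    (hv : ∀ x, x ≠ v → r v x) : (e v : ℕ) = 0 := by
  by_contra h0
  have hx : e.symm ⟨0, by omega⟩ ≠ v := fun hx => h0 (by simp [← hx])
  simpa [Fin.lt_def] using (he _ _).1 (hv _ hx)

theorem val_eq_sub_one_of_forall_rel (he : ∀ a b, r a b ↔ e a < e b) {u : α}
    (hu : ∀ x, x ≠ u → r x u) : (e u : ℕ) = n - 1 := by
  by_contra h0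
  have hx : e.symm ⟨n - 1, by omega⟩ ≠ u := fun hx => h0 (by simp [← hx])
  have := (he _ _).1 (hu _ hx)
  simp [Fin.lt_def] at this
  omega

end FinEquiv

/-- A strongly connected tournament with an edge u→v lying on every directed cycle is
isomorphic to Dₙ, with u ↦ vₙ and v ↦ v₁. -/
theorem stmt_19 (n : ℕ) (hn : 2 ≤ n) (T : Fin n → Fin n → Prop)
    (hirr : ∀ a, ¬ T a a) (htour : ∀ a b : Fin n, a ≠ b → (T a b ↔ ¬ T b a))
    (hstrong : ∀ a b : Fin n, Relation.ReflTransGen T a b)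
    (u v : Fin n) (huv : T u v)
    (hall : ∀ (m : ℕ) (f : Fin m → Fin n), IsCycleFun T f →
      ∃ i : Fin m, f i = u ∧ f (finRotate m i) = v) :
    ∃ e : Fin n ≃ Fin n,
      (∀ a b : Fin n, T a b ↔ DnAdj n (e a) (e b)) ∧
      e u = ⟨n - 1, by omega⟩ ∧ e v = ⟨0, by omega⟩ := by
  replace hall : EdgeOnAllCycles T u v := hall
  have hne : u ≠ v := by rintro rfl; exact hirr u huv
  have hout x (hux : T u x) : x = v := hall.eq_of_adj_left hirr (hstrong x u) hux
  have hin x (hxv : T x v) : x = u := hall.eq_of_adj_right hirr (hstrong v x) hxv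
  have := isStrictTotalOrder_reverseEdge hirr htour hne hout hin
    fun _ _ _ => hall.mem_of_triangle hirr
  obtain ⟨e, he⟩ := exists_equiv_fin_of_isStrictTotalOrder (Fintype.card_fin n)
    (reverseEdge T u v)
  have heu := val_eq_sub_one_of_forall_rel he fun _ => reverseEdge_sink htour hout
  have hev := val_eq_zero_of_forall_rel he fun _ => reverseEdge_source htour hin
  refine ⟨e, fun a b => ?_, Fin.ext heu, Fin.ext hev⟩
  rw [← reverseEdge_reverseEdge huv ((htour u v hne).1 huv)]
  -- naming the inner reversal stops `simp only [reverseEdge]` from unfolding it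
  set R := reverseEdge T u v
  have hu_iff x : x = u ↔ (e x : ℕ) = n - 1 := by
    rw [← heu, ← Fin.ext_iff, e.apply_eq_iff_eq]
  have hv_iff x : x = v ↔ (e x : ℕ) = 0 := by rw [← hev, ← Fin.ext_iff, e.apply_eq_iff_eq]
  simp only [reverseEdge, he, DnAdj, Fin.lt_def, hu_iff, hv_iff]
end
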